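/- arXiv:1701.04016 — 9 statements merged into one kernel-verified Lean document; each statement's English description precedes it below -/
import Mathlib

section
/- Let Δ ⊂ ℝⁿ be a compact convex polytope with 0 in its interior and boundary measure dσ satisfying |∂Δ|_{dσ} = n|Δ|. For every convex function g on Δ (integrable with respect to dy and dσ), one has -g(0) + (1/|Δ|)∫_Δ g dy ≤ (1/|Δ|)(∫_{∂Δ} g dσ - n ∫_Δ g dy), with equality if and only if g is radially affine, i.e. g(tz) = (1-t)g(0) + t g(z) for all t ∈ [0,1], z ∈ ∂Δ. -/
/-!
Let `ρ` be the gauge of `Δ` and let `h y = g 0 + ρ y * (g (y / ρ y) - g 0)` be the function that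
agrees with `g` at `0` and on `∂Δ` and is affine on every ray from `0`. Convexity of `g` on the
segment from `0` to the boundary point `y / ρ y` gives `g ≤ h`. Integrating `h` along rays with
the pullback formula and using `|∂Δ| = n |Δ|` gives `(n + 1) ∫_Δ h = g 0 |Δ| + ∫_{∂Δ} g dσ`, so the
Donaldson–Futaki side minus the Ding side equals `(n + 1) / |Δ| * ∫_Δ (h - g) ≥ 0`. It vanishes
iff the continuous function `h - g ≥ 0` vanishes on `Δ`, the closure of its interior, i.e. iff `g`
is radially affine.
-/

open MeasureTheory Set Filter Topology

section Radial

variable {E : Type*} [NormedAddCommGroup E] [NormedSpace ℝ E] {s : Set E} {g : E → ℝ} {y z : E}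

noncomputable def radialProj (s : Set E) (y : E) : E := (gauge s y)⁻¹ • y

noncomputable def radialInterp (s : Set E) (g : E → ℝ) (y : E) : ℝ :=
  g 0 + gauge s y * (g (radialProj s y) - g 0)

lemma gauge_pos_of_ne_zero (hs₀ : s ∈ 𝓝 0) (hb : Bornology.IsBounded s) (hy : y ≠ 0) :
    0 < gauge s y :=
  (gauge_pos (absorbent_nhds_zero hs₀) ((NormedSpace.isVonNBounded_iff ℝ).2 hb)).2 hy

@[simp]
lemma radialInterp_zero : radialInterp s g 0 = g 0 := by
  simp [radialInterp]

lemma gauge_smul_radialProj (hs₀ : s ∈ 𝓝 0) (hb : Bornology.IsBounded s) (hy : y ≠ 0) :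
    gauge s y • radialProj s y = y := by
  have hpos := gauge_pos_of_ne_zero hs₀ hb hy
  rw [radialProj, smul_smul, mul_inv_cancel₀ hpos.ne', one_smul]

lemma radialProj_mem_frontier (hc : Convex ℝ s) (hs₀ : s ∈ 𝓝 0) (hb : Bornology.IsBounded s)
    (hy : y ≠ 0) : radialProj s y ∈ frontier s := by
  have hpos := gauge_pos_of_ne_zero hs₀ hb hy
  rw [← gauge_eq_one_iff_mem_frontier hc hs₀, radialProj,
    gauge_smul_of_nonneg (inv_nonneg.2 hpos.le), smul_eq_mul, inv_mul_cancel₀ hpos.ne']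

lemma radialProj_mem (hc : Convex ℝ s) (hs₀ : s ∈ 𝓝 0) (hb : Bornology.IsBounded s)
    (hcl : IsClosed s) (y : E) : radialProj s y ∈ s := by
  rcases eq_or_ne y 0 with rfl | hy
  · simpa [radialProj] using mem_of_mem_nhds hs₀
  · exact hcl.frontier_subset (radialProj_mem_frontier hc hs₀ hb hy)

lemma radialInterp_smul_of_mem_frontier (hc : Convex ℝ s) (hs₀ : s ∈ 𝓝 0) (hz : z ∈ frontier s)
    {t : ℝ} (ht : 0 ≤ t) : radialInterp s g (t • z) = (1 - t) * g 0 + t * g z := by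
  rcases ht.eq_or_lt with rfl | ht
  · simp
  have hgauge : gauge s (t • z) = t := by
    rw [gauge_smul_of_nonneg ht.le, (gauge_eq_one_iff_mem_frontier hc hs₀).2 hz, smul_eq_mul,
      mul_one]
  have hproj : radialProj s (t • z) = z := by
    rw [radialProj, hgauge, smul_smul, inv_mul_cancel₀ ht.ne', one_smul]
  rw [radialInterp, hgauge, hproj]
  ring

lemma ConvexOn.le_radialInterp (hg : ConvexOn ℝ s g) (hs₀ : s ∈ 𝓝 0)
    (hb : Bornology.IsBounded s) (hcl : IsClosed s) (hy : y ∈ s) :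
    g y ≤ radialInterp s g y := by
  rcases eq_or_ne y 0 with rfl | hy0
  · simp
  have hρ : gauge s y ≤ 1 := gauge_le_one_of_mem hy
  have hcomb : gauge s y • radialProj s y + (1 - gauge s y) • (0 : E) = y := by
    rw [smul_zero, add_zero, gauge_smul_radialProj hs₀ hb hy0]
  have := hg.2 (radialProj_mem hg.1 hs₀ hb hcl y) (mem_of_mem_nhds hs₀) (gauge_nonneg y)
    (sub_nonneg.2 hρ) (add_sub_cancel _ _)
  rw [hcomb, smul_eq_mul, smul_eq_mul] at this
  rw [radialInterp]
  linarith

lemma eqOn_radialInterp_iff (hc : Convex ℝ s) (hs₀ : s ∈ 𝓝 0) (hb : Bornology.IsBounded s)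
    (hcl : IsClosed s) :
    EqOn g (radialInterp s g) s ↔
      ∀ z ∈ frontier s, ∀ t ∈ Icc (0 : ℝ) 1, g (t • z) = (1 - t) * g 0 + t * g z := by
  refine ⟨fun h z hz t ht => ?_, fun h y hy => ?_⟩
  · rw [h (hc.smul_mem_of_zero_mem (mem_of_mem_nhds hs₀) (hcl.frontier_subset hz) ht),
      radialInterp_smul_of_mem_frontier hc hs₀ hz ht.1]
  rcases eq_or_ne y 0 with rfl | hy0
  · simp
  have := h _ (radialProj_mem_frontier hc hs₀ hb hy0) _ ⟨gauge_nonneg y, gauge_le_one_of_mem hy⟩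
  rw [gauge_smul_radialProj hs₀ hb hy0] at this
  rw [this, radialInterp]
  ring

lemma continuousOn_radialInterp (hc : Convex ℝ s) (hs₀ : s ∈ 𝓝 0) (hK : IsCompact s)
    (hg : ContinuousOn g s) : ContinuousOn (radialInterp s g) s := by
  have hρ : Continuous (gauge s) := continuous_gauge hc hs₀
  have hmaps : MapsTo (radialProj s) s s := fun y _ =>
    radialProj_mem hc hs₀ hK.isBounded hK.isClosed y
  intro y hy
  rcases eq_or_ne y 0 with rfl | hy0
  · -- `g ∘ radialProj s` is bounded on `s` and the gauge tends to `0`.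
    obtain ⟨C, hC⟩ := hK.exists_bound_of_continuousOn hg
    have hbdd : IsBoundedUnder (· ≤ ·) (𝓝[s] 0)
        ((‖·‖) ∘ fun y => g (radialProj s y) - g 0) :=
      ⟨C + ‖g 0‖, eventually_map.2 <| eventually_nhdsWithin_of_forall fun y hy =>
        (norm_sub_le _ _).trans (add_le_add_left (hC _ (hmaps hy)) _)⟩
    have hlim := ((hρ.tendsto' 0 0 gauge_zero).mono_left nhdsWithin_le_nhds
      |>.zero_mul_isBoundedUnder_le hbdd).const_add (g 0)
    rw [add_zero] at hlim
    rw [ContinuousWithinAt, radialInterp_zero]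
    exact hlim
  · have hproj : ContinuousAt (radialProj s) y :=
      (hρ.continuousAt.inv₀ (gauge_pos_of_ne_zero hs₀ hK.isBounded hy0).ne').smul
        continuousAt_id
    exact continuousWithinAt_const.add (hρ.continuousAt.continuousWithinAt.mul
      (((hg _ (hmaps hy)).comp hproj.continuousWithinAt hmaps).sub continuousWithinAt_const))

end Radial

lemma integral_Ioc_pow_mul_affine (m : ℕ) (a b : ℝ) :
    ∫ t in Ioc (0 : ℝ) 1, t ^ m * ((1 - t) * a + t * b) =
      (a + (m + 1) * b) / ((m + 1) * (m + 2)) := by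
  have hexpand : ∀ t : ℝ, t ^ m * ((1 - t) * a + t * b) = a * t ^ m + (b - a) * t ^ (m + 1) :=
    fun t => by ring
  simp_rw [hexpand, ← intervalIntegral.integral_of_le zero_le_one]
  rw [intervalIntegral.integral_add ((intervalIntegral.intervalIntegrable_pow m).const_mul _)
      ((intervalIntegral.intervalIntegrable_pow (m + 1)).const_mul _),
    intervalIntegral.integral_const_mul, intervalIntegral.integral_const_mul,
    integral_pow, integral_pow]
  push_cast
  field_simp
  ring

lemma setIntegral_eq_iff_eqOn_of_le {X : Type*} [TopologicalSpace X] [T2Space X]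
    [MeasurableSpace X] [OpensMeasurableSpace X] {μ : Measure X} [μ.IsOpenPosMeasure]
    [IsFiniteMeasureOnCompacts μ] {s : Set X} {f g : X → ℝ} (hK : IsCompact s)
    (hs : s ⊆ closure (interior s)) (hf : ContinuousOn f s) (hg : ContinuousOn g s)
    (hfg : ∀ x ∈ s, f x ≤ g x) :
    ∫ x in s, f x ∂μ = ∫ x in s, g x ∂μ ↔ EqOn f g s := by
  refine ⟨fun h => ?_, setIntegral_congr_fun hK.measurableSet⟩
  have hae : f =ᵐ[μ.restrict s] g :=
    (integral_eq_iff_of_ae_le (hf.integrableOn_compact hK) (hg.integrableOn_compact hK)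
      (ae_restrict_of_forall_mem hK.measurableSet hfg)).1 h
  exact Measure.eqOn_of_ae_eq hae hf hg hs

section RadialPullback

variable {E : Type*} [NormedAddCommGroup E] [NormedSpace ℝ E] [MeasurableSpace E]
  {μ σ : Measure E} {s : Set E} {n : ℕ}

lemma ne_zero_of_radial_pullback
    (hpull : ∀ F : E → ℝ, ContinuousOn F (closure s) →
      ∫ y in s, F y ∂μ = ∫ z in frontier s, (∫ t in Ioc (0 : ℝ) 1, t ^ (n - 1) * F (t • z)) ∂σ)
    (hnorm : (σ (frontier s)).toReal = n * (μ s).toReal) (hμ : 0 < (μ s).toReal) : n ≠ 0 := by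
  rintro rfl
  have := hpull (fun _ => 1) continuousOn_const
  simp only [zero_tsub, pow_zero, mul_one, setIntegral_const, smul_eq_mul] at this
  simp [measureReal_def, hnorm] at this
  exact hμ.ne' this

lemma integral_radialInterp [BorelSpace E] {g : E → ℝ} (hc : Convex ℝ s) (hs₀ : s ∈ 𝓝 0)
    (hK : IsCompact s) (hg : ContinuousOn g s)
    (hpull : ∀ F : E → ℝ, ContinuousOn F (closure s) →
      ∫ y in s, F y ∂μ = ∫ z in frontier s, (∫ t in Ioc (0 : ℝ) 1, t ^ (n - 1) * F (t • z)) ∂σ)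
    (hnorm : (σ (frontier s)).toReal = n * (μ s).toReal) (hμ : 0 < (μ s).toReal) :
    (n + 1) * ∫ y in s, radialInterp s g y ∂μ =
      g 0 * (μ s).toReal + ∫ z in frontier s, g z ∂σ := by
  obtain ⟨m, rfl⟩ := Nat.exists_eq_add_one_of_ne_zero (ne_zero_of_radial_pullback hpull hnorm hμ)
  have hσ : σ (frontier s) ≠ ⊤ := fun h => by
    have : (0 : ℝ) < (m + 1 : ℕ) * (μ s).toReal := by positivity
    rw [h, ENNReal.toReal_top] at hnorm
    linarith
  have hfr : frontier s ⊆ s := hK.isClosed.frontier_subset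
  have hfr_meas : MeasurableSet (frontier s) := isClosed_frontier.measurableSet
  obtain ⟨C, hC⟩ := hK.exists_bound_of_continuousOn hg
  have hgσ : IntegrableOn g (frontier s) σ :=
    .of_bound hσ.lt_top ((hg.mono hfr).aestronglyMeasurable hfr_meas) C
      (ae_restrict_of_forall_mem hfr_meas fun z hz => hC z (hfr hz))
  have hray : ∀ z ∈ frontier s,
      ∫ t in Ioc (0 : ℝ) 1, t ^ (m + 1 - 1) * radialInterp s g (t • z) =
        (g 0 + (m + 1) * g z) / ((m + 1) * (m + 2)) := fun z hz => by
    rw [← integral_Ioc_pow_mul_affine, Nat.add_sub_cancel]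
    exact setIntegral_congr_fun measurableSet_Ioc fun t ht => by
      rw [radialInterp_smul_of_mem_frontier hc hs₀ hz ht.1.le]
  have hcont : ContinuousOn (radialInterp s g) (closure s) := by
    rw [hK.isClosed.closure_eq]; exact continuousOn_radialInterp hc hs₀ hK hg
  rw [hpull _ hcont, setIntegral_congr_fun hfr_meas hray, integral_div,
    integral_add (integrableOn_const hσ (C := g 0)) (hgσ.const_mul _), integral_const_mul,
    setIntegral_const, smul_eq_mul, measureReal_def, hnorm]
  push_cast
  field_simp
  ring

end RadialPullback

theorem ding_le_donaldson_futaki_general {n : ℕ} (Δ : Set (Fin n → ℝ))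
    (hΔc : IsCompact Δ) (hΔconv : Convex ℝ Δ) (h0 : (0 : Fin n → ℝ) ∈ interior Δ)
    (σ : Measure (Fin n → ℝ))
    (hpull : ∀ F : (Fin n → ℝ) → ℝ, ContinuousOn F (closure Δ) →
      ∫ y in Δ, F y =
        ∫ z in frontier Δ, (∫ t in Set.Ioc (0 : ℝ) 1, t ^ (n - 1) * F (t • z)) ∂σ)
    (hnorm : (σ (frontier Δ)).toReal = n * (volume Δ).toReal)
    (g : (Fin n → ℝ) → ℝ) (hgconv : ConvexOn ℝ Δ g)
    (hgcont : ContinuousOn g (closure Δ)) :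
    (-g 0 + (volume Δ).toReal⁻¹ * ∫ y in Δ, g y ≤
      (volume Δ).toReal⁻¹ *
        ((∫ z in frontier Δ, g z ∂σ) - n * ∫ y in Δ, g y)) ∧
    ((-g 0 + (volume Δ).toReal⁻¹ * ∫ y in Δ, g y =
      (volume Δ).toReal⁻¹ *
        ((∫ z in frontier Δ, g z ∂σ) - n * ∫ y in Δ, g y)) ↔
      ∀ z ∈ frontier Δ, ∀ t ∈ Set.Icc (0 : ℝ) 1,
        g (t • z) = (1 - t) * g 0 + t * g z) := by
  have hΔ₀ : Δ ∈ 𝓝 0 := mem_interior_iff_mem_nhds.1 h0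
  have hgΔ : ContinuousOn g Δ := hgcont.mono subset_closure
  have hhΔ : ContinuousOn (radialInterp Δ g) Δ := continuousOn_radialInterp hΔconv hΔ₀ hΔc hgΔ
  have hg_le : ∀ y ∈ Δ, g y ≤ radialInterp Δ g y := fun y hy =>
    hgconv.le_radialInterp hΔ₀ hΔc.isBounded hΔc.isClosed hy
  set V := (volume Δ).toReal
  have hV : 0 < V := ENNReal.toReal_pos
    (Measure.measure_pos_of_nonempty_interior _ ⟨0, h0⟩).ne' hΔc.measure_lt_top.ne
  have hH := integral_radialInterp hΔconv hΔ₀ hΔc hgΔ hpull hnorm hV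
  set I := ∫ y in Δ, g y
  set H := ∫ y in Δ, radialInterp Δ g y
  have hIH : I ≤ H := setIntegral_mono_on (hgΔ.integrableOn_compact hΔc)
    (hhΔ.integrableOn_compact hΔc) hΔc.measurableSet hg_le
  have hgap : V⁻¹ * ((∫ z in frontier Δ, g z ∂σ) - n * I) - (-g 0 + V⁻¹ * I) =
      (n + 1) * V⁻¹ * (H - I) := by
    field_simp
    linarith
  have hc : 0 < ((n : ℝ) + 1) * V⁻¹ := by positivity
  refine ⟨by linarith [mul_nonneg hc.le (sub_nonneg.2 hIH)], ?_⟩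
  have hΔ_sub : Δ ⊆ closure (interior Δ) := by
    rw [hΔconv.closure_interior_eq_closure_of_nonempty_interior ⟨0, h0⟩]
    exact subset_closure
  rw [eq_comm, ← sub_eq_zero, hgap, mul_eq_zero, or_iff_right hc.ne', sub_eq_zero, eq_comm,
    setIntegral_eq_iff_eqOn_of_le hΔc hΔ_sub hgΔ hhΔ hg_le,
    eqOn_radialInterp_iff hΔconv hΔ₀ hΔc.isBounded hΔc.isClosed]

/-- Ding invariant versus Donaldson–Futaki invariant on a toric polytope:
`-g(0) + (1/|Δ|)∫_Δ g ≤ (1/|Δ|)(∫_{∂Δ} g dσ - n∫_Δ g)` for every convex `g`,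
with equality iff `g` is radially affine. -/
theorem ding_le_donaldson_futaki {n : ℕ} (Δ : Set (Fin n → ℝ))
    (hΔc : IsCompact Δ) (hΔconv : Convex ℝ Δ) (h0 : (0 : Fin n → ℝ) ∈ interior Δ)
    (σ : Measure (Fin n → ℝ)) (hσfin : IsFiniteMeasure σ)
    (hpull : ∀ F : (Fin n → ℝ) → ℝ, ContinuousOn F (closure Δ) →
      ∫ y in Δ, F y =
        ∫ z in frontier Δ, (∫ t in Set.Ioc (0 : ℝ) 1, t ^ (n - 1) * F (t • z)) ∂σ)
    (hnorm : (σ (frontier Δ)).toReal = n * (volume Δ).toReal)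
    (g : (Fin n → ℝ) → ℝ) (hgconv : ConvexOn ℝ Δ g)
    (hgcont : ContinuousOn g (closure Δ)) :
    (-g 0 + (volume Δ).toReal⁻¹ * ∫ y in Δ, g y ≤
      (volume Δ).toReal⁻¹ *
        ((∫ z in frontier Δ, g z ∂σ) - n * ∫ y in Δ, g y)) ∧
    ((-g 0 + (volume Δ).toReal⁻¹ * ∫ y in Δ, g y =
      (volume Δ).toReal⁻¹ *
        ((∫ z in frontier Δ, g z ∂σ) - n * ∫ y in Δ, g y)) ↔
      ∀ z ∈ frontier Δ, ∀ t ∈ Set.Icc (0 : ℝ) 1,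
        g (t • z) = (1 - t) * g 0 + t * g z) :=
  ding_le_donaldson_futaki_general Δ hΔc hΔconv h0 σ hpull hnorm g hgconv hgcont
end

section
/- Let Δ ⊂ ℝⁿ be a compact convex polytope with 0 in its interior and l its Ricci affine function. Define I_l(g) = -g(0) + ∫_Δ g l dy for convex functions g on Δ. Then I_l(g) ≥ 0 for every integrable convex function g if and only if l ≥ 0 on Δ; and in that case I_l(g) = 0 holds only when g is affine on Δ (assuming l is not identically zero on any open subset, i.e. l > 0 on a set of full measure or l > 0 on the interior). -/
/-!
A convex `g` lies above its supporting affine function `g 0 + φ` at the interior point `0`.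
Since `l` has mass one and barycenter `0`, integrating against `l ≥ 0` gives `g 0 ≤ ∫ g l`
(Jensen's inequality without any regularity of `g` at the boundary). If instead `l < 0`
somewhere, the convex function `-min l 0` has negative invariant.

In the equality case `(g - g 0 - φ) l` is a nonnegative continuous function with integral zero,
so it vanishes on `Δ`. An affine function that is nonnegative on `Δ` and vanishes at an interior
point has a local minimum there, hence is constant, hence zero, contradicting `∫ l = 1`;
so `l > 0` on the interior, `g = g 0 + φ` there, and on all of `Δ` by continuity.
-/

open MeasureTheory Set Filter Topology

theorem ConvexOn.exists_subgradient_of_mem_interior {E : Type*} [NormedAddCommGroup E]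
    [NormedSpace ℝ E] [FiniteDimensional ℝ E] {s : Set E} {g : E → ℝ} {x : E}
    (hg : ConvexOn ℝ s g) (hx : x ∈ interior s) :
    ∃ φ : StrongDual ℝ E, ∀ y ∈ s, g x + φ (y - x) ≤ g y := by
  set A : Set (E × ℝ) := {p | p.1 ∈ s ∧ g p.1 ≤ p.2}
  have hAint : (x, g x + 1) ∈ interior A := by
    set U := Prod.fst ⁻¹' interior s ∩ (fun p : E × ℝ => p.2 - g p.1) ⁻¹' Ioi 0
    have hU : IsOpen U :=
      ContinuousOn.isOpen_inter_preimage (continuous_snd.continuousOn.sub <|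
        ((hg.subset interior_subset hg.1.interior).continuousOn isOpen_interior).comp
          continuousOn_fst fun _ hp => hp) (isOpen_interior.preimage continuous_fst) isOpen_Ioi
    have hUA : U ⊆ A := fun p hp => ⟨interior_subset hp.1, (sub_pos.1 hp.2).le⟩
    exact interior_maximal hUA hU ⟨hx, by simp⟩
  have hxA : (x, g x) ∉ interior A := by
    intro h
    have hev : ∀ᶠ t in 𝓝 (g x), (x, t) ∈ A :=
      (continuous_const.prodMk continuous_id).continuousAt.preimage_mem_nhds
        (mem_interior_iff_mem_nhds.1 h)
    obtain ⟨t, hlt, ht⟩ := hev.exists_lt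
    exact hlt.not_ge ht.2
  obtain ⟨f, hf0, hf⟩ := geometric_hahn_banach_of_nonempty_interior_point hg.convex_epigraph hxA
    ⟨_, hAint⟩
  set ψ : StrongDual ℝ E := f.comp (ContinuousLinearMap.inl ℝ E ℝ)
  set β := f (0, 1)
  have hsplit : ∀ y t, f (y, t) = ψ y + t * β := fun y t => by
    have : (y, t) = ContinuousLinearMap.inl ℝ E ℝ y + t • ((0 : E), (1 : ℝ)) := by simp
    rw [this, map_add, map_smul, smul_eq_mul]; rfl
  have hgraph : ∀ y ∈ s, ψ y + g y * β ≤ ψ x + g x * β := fun y hy => by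
    simpa [hsplit] using hf (y, g y) ⟨hy, le_rfl⟩
  have hβ : β < 0 := by
    refine lt_of_le_of_ne ?_ fun hβ0 => hf0 ?_
    · have := hf (x, g x + 1) (interior_subset hAint)
      rw [hsplit, hsplit] at this
      nlinarith
    · -- a vertical supporting hyperplane at the interior point `x` would force `f = 0`
      have hmax : IsLocalMax ψ x := mem_of_superset (mem_interior_iff_mem_nhds.1 hx)
        fun y hy => by simpa [hβ0] using hgraph y hy
      have hψ : ψ = 0 := hmax.hasFDerivAt_eq_zero ψ.hasFDerivAt
      ext p <;> simp [hsplit, hψ, hβ0]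
  refine ⟨(-β)⁻¹ • ψ, fun y hy => ?_⟩
  have : (-β)⁻¹ * (ψ y - ψ x) ≤ g y - g x := by
    rw [inv_mul_le_iff₀ (neg_pos.2 hβ)]
    nlinarith [hgraph y hy]
  simp only [FunLike.coe_smul, Pi.smul_apply, map_sub, smul_eq_mul]
  linarith

theorem StrongDual.exists_eq_sum_mul {ι : Type*} [Fintype ι]
    (φ : StrongDual ℝ (ι → ℝ)) : ∃ a : ι → ℝ, ∀ y, φ y = ∑ i, a i * y i := by
  classical
  exact ⟨fun i => φ fun j => if i = j then 1 else 0, fun y =>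
    (φ.toLinearMap.pi_apply_eq_sum_univ y).trans (by simp [mul_comm])⟩

theorem exists_strongDual_eq_sum_mul {ι : Type*} [Fintype ι] (a : ι → ℝ) :
    ∃ φ : StrongDual ℝ (ι → ℝ), ∀ y, φ y = ∑ i, a i * y i :=
  ⟨∑ i, a i • ContinuousLinearMap.proj i, fun y => by simp⟩

theorem Convex.subset_closure_interior {E : Type*} [AddCommGroup E] [Module ℝ E]
    [TopologicalSpace E] [IsTopologicalAddGroup E] [ContinuousSMul ℝ E] {s : Set E}
    (hs : Convex ℝ s) (hs' : (interior s).Nonempty) : s ⊆ closure (interior s) :=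
  (hs.closure_interior_eq_closure_of_nonempty_interior hs').symm ▸ subset_closure

section SetIntegral

variable {X : Type*} [TopologicalSpace X] [MeasurableSpace X]
  {μ : Measure X} [μ.IsOpenPosMeasure] {s : Set X} {f : X → ℝ}

theorem setIntegral_pos_of_continuousOn {x : X} (hs : s ⊆ closure (interior s))
    (hsm : MeasurableSet s) (hf : ContinuousOn f s) (hfi : IntegrableOn f s μ)
    (hf0 : ∀ y ∈ s, 0 ≤ f y) (hx : x ∈ s) (hfx : 0 < f x) : 0 < ∫ y in s, f y ∂μ := by
  obtain ⟨U, hU, hUs⟩ := continuousOn_iff'.1 hf (Ioi 0) isOpen_Ioi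
  have hxU : x ∈ U := (hUs ▸ ⟨hfx, hx⟩ : x ∈ U ∩ s).1
  obtain ⟨z, hzU, hz⟩ := mem_closure_iff.1 (hs hx) U hU hxU
  rw [setIntegral_pos_iff_support_of_nonneg_ae (ae_restrict_of_forall_mem hsm hf0) hfi]
  refine ((hU.inter isOpen_interior).measure_pos μ ⟨z, hzU, hz⟩).trans_le (measure_mono ?_)
  rintro y ⟨hyU, hy⟩
  have hy' : y ∈ f ⁻¹' Ioi 0 ∩ s := hUs ▸ ⟨hyU, interior_subset hy⟩
  exact ⟨hy'.1.ne', hy'.2⟩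

theorem eqOn_zero_of_setIntegral_eq_zero (hs : s ⊆ closure (interior s))
    (hsm : MeasurableSet s) (hf : ContinuousOn f s) (hfi : IntegrableOn f s μ)
    (hf0 : ∀ y ∈ s, 0 ≤ f y) (hint : ∫ y in s, f y ∂μ = 0) : EqOn f 0 s := fun y hy =>
  (hf0 y hy).eq_or_lt.elim Eq.symm fun hfy =>
    ((setIntegral_pos_of_continuousOn hs hsm hf hfi hf0 hy hfy).ne' hint).elim

end SetIntegral

section RelativeDing

variable {E : Type*} [NormedAddCommGroup E] [NormedSpace ℝ E] [MeasurableSpace E]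
  {μ : Measure E} {Δ : Set E} {l g : E → ℝ}

noncomputable def relativeDingInvariant (μ : Measure E) (Δ : Set E) (l g : E → ℝ) : ℝ :=
  -g 0 + ∫ y in Δ, g y * l y ∂μ

structure IsRicciAffine (μ : Measure E) (Δ : Set E) (l : E → ℝ) : Prop where
  exists_eq_add_const : ∃ (φ : StrongDual ℝ E) (c : ℝ), l = fun y => φ y + c
  setIntegral_eq_one : ∫ y in Δ, l y ∂μ = 1
  setIntegral_mul_eq_zero : ∀ φ : StrongDual ℝ E, ∫ y in Δ, φ y * l y ∂μ = 0

namespace IsRicciAffine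

theorem continuous (hl : IsRicciAffine μ Δ l) : Continuous l := by
  obtain ⟨φ, c, rfl⟩ := hl.exists_eq_add_const
  fun_prop

theorem pos_of_mem_interior (hl : IsRicciAffine μ Δ l) (hnn : ∀ y ∈ Δ, 0 ≤ l y) {x : E}
    (hx : x ∈ interior Δ) : 0 < l x := by
  by_contra! hlx
  have hlx0 : l x = 0 := hlx.antisymm (hnn x (interior_subset hx))
  have hmin : IsLocalMin l x := mem_of_superset (mem_interior_iff_mem_nhds.1 hx)
    fun y hy => hlx0 ▸ hnn y hy
  have h1 := hl.setIntegral_eq_one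
  obtain ⟨φ, c, rfl⟩ := hl.exists_eq_add_const
  have hφ : φ = 0 := hmin.hasFDerivAt_eq_zero (φ.hasFDerivAt.add_const c)
  simp_all

variable [BorelSpace E] [IsFiniteMeasureOnCompacts μ]

theorem integrableOn_mul (hl : IsRicciAffine μ Δ l) (hΔc : IsCompact Δ) {h : E → ℝ}
    (hh : ContinuousOn h Δ) : IntegrableOn (fun y => h y * l y) Δ μ :=
  (hh.mul hl.continuous.continuousOn).integrableOn_compact hΔc

theorem setIntegral_affine_mul (hl : IsRicciAffine μ Δ l)
    (hΔc : IsCompact Δ) (φ : StrongDual ℝ E) (c : ℝ) :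
    ∫ y in Δ, (φ y + c) * l y ∂μ = c := by
  simp_rw [add_mul]
  rw [integral_add (hl.integrableOn_mul hΔc φ.continuous.continuousOn)
    (hl.integrableOn_mul hΔc continuousOn_const), integral_const_mul,
    hl.setIntegral_mul_eq_zero, hl.setIntegral_eq_one, zero_add, mul_one]

theorem nonneg_of_forall_relativeDingInvariant_nonneg [μ.IsOpenPosMeasure]
    (hl : IsRicciAffine μ Δ l) (hΔc : IsCompact Δ) (hΔconv : Convex ℝ Δ)
    (h0 : (0 : E) ∈ interior Δ)
    (h : ∀ g, ConvexOn ℝ Δ g → IntegrableOn g Δ μ → 0 ≤ relativeDingInvariant μ Δ l g) :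
    ∀ y ∈ Δ, 0 ≤ l y := by
  by_contra! ⟨y₀, hy₀, hly₀⟩
  have hlc := hl.continuous
  obtain ⟨φ, c, rfl⟩ := hl.exists_eq_add_const
  set m : E → ℝ := fun y => min (φ y + c) 0
  have hm : ConcaveOn ℝ Δ m :=
    ((φ.toLinearMap.concaveOn hΔconv).add_const c).inf (concaveOn_const 0 hΔconv)
  have hmc : Continuous m := hlc.min continuous_const
  -- the convex test function `-min l 0` has `I_l = min (l 0) 0 - ∫ (min l 0) ^ 2 < 0`
  have hsq : ∀ y, -m y * (φ y + c) = -m y ^ 2 := fun y => by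
    rcases le_total (φ y + c) 0 with hy | hy
    · simp only [m, min_eq_left hy]; ring
    · simp only [m, min_eq_right hy]; ring
  have hpos : 0 < ∫ y in Δ, m y ^ 2 ∂μ :=
    setIntegral_pos_of_continuousOn (hΔconv.subset_closure_interior ⟨0, h0⟩)
      hΔc.measurableSet (hmc.pow 2).continuousOn
      ((hmc.pow 2).continuousOn.integrableOn_compact hΔc) (fun y _ => sq_nonneg _) hy₀
      (by simp only [m, min_eq_left hly₀.le]; nlinarith)
  have hI := h (fun y => -m y) hm.neg (hmc.neg.continuousOn.integrableOn_compact hΔc)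
  simp only [relativeDingInvariant, hsq, integral_neg] at hI
  have hm0 : m 0 ≤ 0 := min_le_right _ _
  linarith

variable [FiniteDimensional ℝ E]

theorem relativeDingInvariant_nonneg (hl : IsRicciAffine μ Δ l) (hΔc : IsCompact Δ)
    (h0 : (0 : E) ∈ interior Δ) (hnn : ∀ y ∈ Δ, 0 ≤ l y) (hg : ConvexOn ℝ Δ g)
    (hgi : IntegrableOn g Δ μ) : 0 ≤ relativeDingInvariant μ Δ l g := by
  obtain ⟨φ, hφ⟩ := hg.exists_subgradient_of_mem_interior h0
  have hmono : ∫ y in Δ, (φ y + g 0) * l y ∂μ ≤ ∫ y in Δ, g y * l y ∂μ :=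
    setIntegral_mono_on (hl.integrableOn_mul hΔc (by fun_prop))
      (hgi.mul_continuousOn hl.continuous.continuousOn hΔc) hΔc.measurableSet fun y hy =>
        mul_le_mul_of_nonneg_right (by simpa [add_comm] using hφ y hy) (hnn y hy)
  rw [hl.setIntegral_affine_mul hΔc] at hmono
  unfold relativeDingInvariant
  linarith

theorem exists_eq_add_of_relativeDingInvariant_eq_zero [μ.IsOpenPosMeasure]
    (hl : IsRicciAffine μ Δ l) (hΔc : IsCompact Δ) (h0 : (0 : E) ∈ interior Δ)
    (hnn : ∀ y ∈ Δ, 0 ≤ l y) (hg : ConvexOn ℝ Δ g) (hgc : ContinuousOn g Δ)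
    (hgi : IntegrableOn g Δ μ) (hI : relativeDingInvariant μ Δ l g = 0) :
    ∃ φ : StrongDual ℝ E, ∀ y ∈ Δ, g y = φ y + g 0 := by
  obtain ⟨φ, hφ⟩ := hg.exists_subgradient_of_mem_interior h0
  refine ⟨φ, ?_⟩
  have hΔ := hg.1.subset_closure_interior ⟨0, h0⟩
  set F : E → ℝ := fun y => g y - (φ y + g 0)
  have hFc : ContinuousOn F Δ := hgc.sub (φ.continuous.add continuous_const).continuousOn
  have hFl : ∫ y in Δ, F y * l y ∂μ = 0 := by
    simp_rw [F, sub_mul]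
    rw [integral_sub (hgi.mul_continuousOn hl.continuous.continuousOn hΔc)
      (hl.integrableOn_mul hΔc (h := fun y => φ y + g 0) (by fun_prop)),
      hl.setIntegral_affine_mul hΔc]
    unfold relativeDingInvariant at hI
    linarith
  have hFl0 := eqOn_zero_of_setIntegral_eq_zero hΔ hΔc.measurableSet
    (hFc.mul hl.continuous.continuousOn) (hl.integrableOn_mul hΔc hFc)
    (fun y hy => mul_nonneg (by simpa [F, add_comm] using hφ y hy) (hnn y hy)) hFl
  have hF : EqOn F 0 (interior Δ) := fun y hy =>
    (mul_eq_zero.1 (hFl0 (interior_subset hy))).resolve_right (hl.pos_of_mem_interior hnn hy).ne'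
  intro y hy
  simpa [F, sub_eq_zero] using hF.of_subset_closure hFc continuousOn_const interior_subset hΔ hy

end IsRicciAffine

end RelativeDing

theorem isRicciAffine_of_coord_moments {ι : Type*} [Fintype ι]
    {Δ : Set (ι → ℝ)} {l : (ι → ℝ) → ℝ} (hΔc : IsCompact Δ)
    (hla : ∃ a : ι → ℝ, ∃ c : ℝ, ∀ y, l y = (∑ i, a i * y i) + c)
    (hl1 : ∫ y in Δ, l y = 1) (hlm : ∀ i, ∫ y in Δ, y i * l y = 0) :
    IsRicciAffine volume Δ l := by
  obtain ⟨a, c, hl⟩ := hla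
  obtain ⟨φ, hφ⟩ := exists_strongDual_eq_sum_mul a
  have hφl : l = fun y => φ y + c := funext fun y => by rw [hl, hφ]
  refine ⟨⟨φ, c, hφl⟩, hl1, fun ψ => ?_⟩
  obtain ⟨b, hb⟩ := ψ.exists_eq_sum_mul
  have hlc : Continuous l := hφl ▸ by fun_prop
  simp_rw [hb, Finset.sum_mul, mul_assoc]
  have hint (i : ι) : IntegrableOn (fun y => y i * l y) Δ :=
    ((continuous_apply i).mul hlc).continuousOn.integrableOn_compact hΔc
  rw [integral_finsetSum _ fun i _ => (hint i).const_mul (b i)]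
  simp [integral_const_mul, hlm]

/-- With `l` the Ricci affine function of `Δ` and
`I_l(g) = -g(0) + ∫_Δ g·l dy`: `I_l(g) ≥ 0` for all integrable convex `g`
iff `l ≥ 0` on `Δ`; and in that case `I_l(g) = 0` only for affine `g`. -/
theorem relative_ding_semistable_iff {n : ℕ} (Δ : Set (Fin n → ℝ))
    (hΔc : IsCompact Δ) (hΔconv : Convex ℝ Δ)
    (h0 : (0 : Fin n → ℝ) ∈ interior Δ)
    (l : (Fin n → ℝ) → ℝ)
    (hla : ∃ a : Fin n → ℝ, ∃ c : ℝ, ∀ y, l y = (∑ i, a i * y i) + c)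
    (hl1 : ∫ y in Δ, l y = 1)
    (hlm : ∀ i : Fin n, ∫ y in Δ, y i * l y = 0) :
    ((∀ g : (Fin n → ℝ) → ℝ, ConvexOn ℝ Δ g → IntegrableOn g Δ →
        0 ≤ -g 0 + ∫ y in Δ, g y * l y) ↔ ∀ y ∈ Δ, 0 ≤ l y) ∧
    ((∀ y ∈ Δ, 0 ≤ l y) →
      ∀ g : (Fin n → ℝ) → ℝ, ConvexOn ℝ Δ g → ContinuousOn g Δ →
        IntegrableOn g Δ →
        -g 0 + (∫ y in Δ, g y * l y) = 0 →
        ∃ a : Fin n → ℝ, ∃ c : ℝ, ∀ y ∈ Δ, g y = (∑ i, a i * y i) + c) := by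
  have hl := isRicciAffine_of_coord_moments hΔc hla hl1 hlm
  refine ⟨⟨hl.nonneg_of_forall_relativeDingInvariant_nonneg hΔc hΔconv h0,
    fun hnn g hg hgi => hl.relativeDingInvariant_nonneg hΔc h0 hnn hg hgi⟩,
    fun hnn g hg hgc hgi hI => ?_⟩
  obtain ⟨φ, hφ⟩ :=
    hl.exists_eq_add_of_relativeDingInvariant_eq_zero hΔc h0 hnn hg hgc hgi hI
  obtain ⟨a, ha⟩ := φ.exists_eq_sum_mul
  exact ⟨a, g 0, fun y hy => by rw [hφ y hy, ha]⟩
end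

section
/- Let Δ ⊂ ℝⁿ be a compact convex polytope with 0 in its interior and l its Ricci affine function. If Δ ⊄ {l ≥ 0}, then for g = l⁺ = max{0, l} one has I_l(l⁺) = -∫_{Δ ∩ {l<0}} l² dy < 0; in particular Δ is relative Ding unstable. -/
open MeasureTheory

/-- If the Ricci affine function `l` of `Δ` takes a negative value on `Δ`, then
for `g = l⁺ = max{0,l}` one has `I_l(l⁺) = -∫_{Δ∩{l<0}} l² dy < 0`; in
particular `Δ` is relative Ding unstable. -/
theorem relative_ding_unstable_of_neg {n : ℕ} (Δ : Set (Fin n → ℝ))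
    (hΔc : IsCompact Δ) (hΔconv : Convex ℝ Δ)
    (h0 : (0 : Fin n → ℝ) ∈ interior Δ)
    (l : (Fin n → ℝ) → ℝ)
    (hla : ∃ a : Fin n → ℝ, ∃ c : ℝ, ∀ y, l y = (∑ i, a i * y i) + c)
    (hl1 : ∫ y in Δ, l y = 1)
    (hlm : ∀ i : Fin n, ∫ y in Δ, y i * l y = 0)
    (hneg : ∃ y ∈ Δ, l y < 0) :
    (-(max 0 (l 0)) + ∫ y in Δ, max 0 (l y) * l y =
      -∫ y in Δ ∩ {y | l y < 0}, (l y) ^ 2) ∧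
    (-(max 0 (l 0)) + ∫ y in Δ, max 0 (l y) * l y < 0) := by
  obtain ⟨a, c, hl⟩ := hla
  have hlc : Continuous l := by
    have : l = fun y => (∑ i, a i * y i) + c := funext hl
    rw [this]; continuity
  have hΔm : MeasurableSet Δ := hΔc.isClosed.measurableSet
  have hInt : ∀ f : (Fin n → ℝ) → ℝ, Continuous f → IntegrableOn f Δ := fun f hf =>
    hf.locallyIntegrable.integrableOn_isCompact hΔc
  have hc0 : l 0 = c := by simp [hl]
  -- ∫_Δ l² = c
  have hll : ∫ y in Δ, l y * l y = c := by
    have h1 : ∀ y : Fin n → ℝ, l y * l y = (∑ i, a i * (y i * l y)) + c * l y := by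
      intro y
      have h2 : ∑ i, a i * (y i * l y) = (∑ i, a i * y i) * l y := by
        rw [Finset.sum_mul]; exact Finset.sum_congr rfl fun i _ => by ring
      rw [h2, ← add_mul, ← hl y]
    calc ∫ y in Δ, l y * l y
        = ∫ y in Δ, ((∑ i, a i * (y i * l y)) + c * l y) :=
          setIntegral_congr_fun hΔm (fun y _ => h1 y)
      _ = (∫ y in Δ, ∑ i, a i * (y i * l y)) + ∫ y in Δ, c * l y := by
          apply integral_add
          · apply hInt; fun_prop
          · apply hInt; fun_prop
      _ = (∑ i, a i * ∫ y in Δ, y i * l y) + c * ∫ y in Δ, l y := by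
          rw [integral_const_mul]
          congr 1
          rw [integral_finset_sum]
          · exact Finset.sum_congr rfl fun i _ => integral_const_mul _ _
          · intro i _; apply Integrable.const_mul; apply hInt; fun_prop
      _ = c := by simp [hlm, hl1]
  have hcnn : 0 ≤ c := by
    rw [← hll]; exact setIntegral_nonneg hΔm fun y _ => mul_self_nonneg _
  set S := Δ ∩ {y | l y < 0} with hS
  set T := Δ ∩ {y | 0 ≤ l y} with hT
  have hSm : MeasurableSet S := hΔm.inter (isOpen_lt hlc continuous_const).measurableSet
  have hTm : MeasurableSet T := hΔm.inter (isClosed_le continuous_const hlc).measurableSet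
  have hunion : T ∪ S = Δ := by
    rw [hT, hS, ← Set.inter_union_distrib_left]
    have : {y | 0 ≤ l y} ∪ {y | l y < 0} = Set.univ := by
      ext y; simp [le_or_gt]
    rw [this, Set.inter_univ]
  have hdisj : Disjoint T S := by
    apply Set.disjoint_left.mpr
    intro y hy1 hy2
    have h1 : 0 ≤ l y := hy1.2
    have h2 : l y < 0 := hy2.2
    linarith
  have hsub : ∀ u : Set (Fin n → ℝ), u ⊆ Δ → ∀ f : (Fin n → ℝ) → ℝ, Continuous f →
      IntegrableOn f u := fun u hu f hf => (hInt f hf).mono_set hu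
  -- split max integral
  have hmax : ∫ y in Δ, max 0 (l y) * l y = ∫ y in T, l y * l y := by
    rw [← hunion, setIntegral_union hdisj hSm
      (hsub T (hunion ▸ Set.subset_union_left) _ (by fun_prop))
      (hsub S (hunion ▸ Set.subset_union_right) _ (by fun_prop))]
    have e1 : ∫ y in T, max 0 (l y) * l y = ∫ y in T, l y * l y :=
      setIntegral_congr_fun hTm fun y hy => by
        rw [max_eq_right (hy.2 : 0 ≤ l y)]
    have e2 : ∫ y in S, max 0 (l y) * l y = 0 := by
      rw [setIntegral_congr_fun hSm (g := fun _ => (0:ℝ)) fun y hy => by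
        rw [max_eq_left (le_of_lt (hy.2 : l y < 0))]; ring]
      simp
    rw [e1, e2, add_zero]
  have hsplit : (∫ y in T, l y * l y) + ∫ y in S, l y * l y = c := by
    rw [← hll, ← hunion, setIntegral_union hdisj hSm
      (hsub T (hunion ▸ Set.subset_union_left) _ (by fun_prop))
      (hsub S (hunion ▸ Set.subset_union_right) _ (by fun_prop))]
  have hsq : ∫ y in S, (l y) ^ 2 = ∫ y in S, l y * l y := by
    simp [sq]
  -- positivity of ∫_S l²
  have hpos : 0 < ∫ y in S, (l y) ^ 2 := by
    obtain ⟨y₀, hy₀, hy₀neg⟩ := hneg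
    have hd : 0 < c - l y₀ := by linarith
    set b := (c + (c - l y₀)) / (2 * (c - l y₀)) with hb
    have hbnn : 0 ≤ b := by positivity
    have han : 0 < -(l y₀) / (2 * (c - l y₀)) := div_pos (by linarith) (by linarith)
    have habs : -(l y₀) / (2 * (c - l y₀)) + b = 1 := by
      rw [hb]; field_simp; ring
    have hx : b • y₀ ∈ interior Δ := by
      have := hΔconv.combo_interior_self_mem_interior h0 hy₀ han hbnn habs
      simpa using this
    have hlx : l (b • y₀) < 0 := by
      have h1 : l (b • y₀) = b * (l y₀ - c) + c := by
        rw [hl, hl y₀]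
        simp only [Pi.smul_apply, smul_eq_mul]
        have h2 : ∑ i, a i * (b * y₀ i) = b * ∑ i, a i * y₀ i := by
          rw [Finset.mul_sum]; exact Finset.sum_congr rfl fun i _ => by ring
        rw [h2]; ring
      rw [h1, hb]
      have : (c + (c - l y₀)) / (2 * (c - l y₀)) * (l y₀ - c) + c = l y₀ / 2 := by
        field_simp; ring
      rw [this]; linarith
    set U := interior Δ ∩ {y | l y < 0} with hU
    have hUo : IsOpen U := isOpen_interior.inter (isOpen_lt hlc continuous_const)
    have hUpos : 0 < volume U := hUo.measure_pos volume ⟨b • y₀, hx, hlx⟩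
    rw [setIntegral_pos_iff_support_of_nonneg_ae]
    · refine hUpos.trans_le (measure_mono fun y hy => ?_)
      exact ⟨Function.mem_support.mpr (pow_ne_zero 2 (ne_of_lt (hy.2 : l y < 0))),
        interior_subset hy.1, hy.2⟩
    · exact Filter.Eventually.of_forall fun y => sq_nonneg _
    · exact hsub S (Set.inter_subset_left) _ (by fun_prop)
  constructor
  · rw [hc0, max_eq_right hcnn, hmax, hsq]; linarith
  · rw [hc0, max_eq_right hcnn, hmax]
    have := hsq ▸ hpos
    linarith
end

section
/- Let Δ ⊂ ℝⁿ be a compact convex polytope with 0 in its interior and l its Ricci affine function. There exists a constant c > 0 such that I_l(g) ≥ c ∫_Δ g dy for all normalized convex functions g (convex with g ≥ g(0) = 0) if and only if inf_Δ l > 0. -/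
/-!
If `δ ≤ l` on `Δ` with `δ > 0`, then `I_l(g) = ∫_Δ g l ≥ δ ∫_Δ g` for every normalized `g`.
Conversely, suppose `I_l(g) ≥ c ∫_Δ g`. For `s < min c (l 0)` the truncation
`g = max 0 (s - l)` is a normalized convex function (`l` is affine) with `I_l(g) ≤ s ∫_Δ g`,
so `∫_Δ g = 0`; since `Δ` is the closure of its interior, this forces `l ≥ s` on `Δ`. Hence
`l ≥ min c (l 0)` on `Δ`, and `l 0 > 0`: otherwise the concave `l` would attain its minimum over
`Δ` at the interior point `0`, so `l ≤ l 0 ≤ 0` on `Δ`, contradicting `∫_Δ l = 1`.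
-/

open MeasureTheory Set Filter Topology

/-- `-g 0 + ∫_Δ g l` is the functional `I_l(g)`, tested on the normalized convex `g`. -/
def DingStableWith {E : Type*} [MeasurableSpace E] [AddCommGroup E] [Module ℝ E]
    (μ : Measure E) (Δ : Set E) (l : E → ℝ) (c : ℝ) : Prop :=
  ∀ g : E → ℝ, ConvexOn ℝ Δ g → g 0 = 0 → (∀ y ∈ Δ, 0 ≤ g y) → IntegrableOn g Δ μ →
    c * ∫ y in Δ, g y ∂μ ≤ -g 0 + ∫ y in Δ, g y * l y ∂μ

theorem ConcaveOn.le_of_isMinOn_of_mem_interior {E : Type*} [AddCommGroup E] [Module ℝ E]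
    [TopologicalSpace E] [ContinuousAdd E] [ContinuousSMul ℝ E] {s : Set E} {f : E → ℝ}
    {x y : E} (hf : ConcaveOn ℝ s f) (hx : x ∈ interior s) (hmin : IsMinOn f s x)
    (hy : y ∈ s) : f y ≤ f x := by
  have hnear : ∀ᶠ ε in 𝓝 (0 : ℝ), x + ε • (x - y) ∈ s := by
    have hcont : Continuous fun ε : ℝ => x + ε • (x - y) := by fun_prop
    exact hcont.tendsto' 0 x (by simp) (mem_interior_iff_mem_nhds.1 hx)
  obtain ⟨ε, hεs, hε : 0 < ε⟩ := ((hnear.filter_mono nhdsWithin_le_nhds).and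
    (self_mem_nhdsWithin : Ioi (0 : ℝ) ∈ 𝓝[>] 0)).exists
  -- `x` lies strictly between `y` and the point `x + ε • (x - y)` beyond it.
  have hcomb : (1 + ε)⁻¹ • (x + ε • (x - y)) + (ε * (1 + ε)⁻¹) • y = x := by
    match_scalars <;> field_simp
    ring
  have hconc := hf.2 hεs hy (by positivity : (0 : ℝ) ≤ (1 + ε)⁻¹)
    (by positivity : (0 : ℝ) ≤ ε * (1 + ε)⁻¹) (by field_simp)
  rw [hcomb, smul_eq_mul, smul_eq_mul] at hconc
  have hmx : (1 + ε)⁻¹ * f x ≤ (1 + ε)⁻¹ * f (x + ε • (x - y)) :=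
    mul_le_mul_of_nonneg_left (hmin hεs) (by positivity)
  have hsum : (1 + ε)⁻¹ + ε * (1 + ε)⁻¹ = 1 := by field_simp
  refine le_of_mul_le_mul_left ?_ (by positivity : 0 < ε * (1 + ε)⁻¹)
  linear_combination hconc + hmx - f x * hsum

section Measure

variable {E : Type*} [NormedAddCommGroup E] [NormedSpace ℝ E] [MeasurableSpace E]
  {μ : Measure E} {Δ : Set E} {l : E → ℝ}

theorem Convex.measure_inter_pos [μ.IsOpenPosMeasure] {U : Set E} (hΔ : Convex ℝ Δ)
    (hint : (interior Δ).Nonempty) (hU : IsOpen U) (hne : (U ∩ Δ).Nonempty) :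
    0 < μ (U ∩ Δ) := by
  obtain ⟨y, hyU, hyΔ⟩ := hne
  have hy : y ∈ closure (interior Δ) :=
    hΔ.closure_interior_eq_closure_of_nonempty_interior hint ▸ subset_closure hyΔ
  have hUint : (U ∩ interior Δ).Nonempty := mem_closure_iff.1 hy U hU hyU
  exact ((hU.inter isOpen_interior).measure_pos μ hUint).trans_le
    (measure_mono (inter_subset_inter_right U interior_subset))

variable [OpensMeasurableSpace E]

theorem dingStableWith_of_le [IsFiniteMeasureOnCompacts μ] {δ : ℝ} (hΔ : IsCompact Δ)
    (hl : Continuous l) (hδl : ∀ y ∈ Δ, δ ≤ l y) : DingStableWith μ Δ l δ := by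
  intro g _ hg0 hg_nonneg hg_int
  rw [hg0, neg_zero, zero_add, ← integral_const_mul]
  refine setIntegral_mono_on (hg_int.const_mul δ) (hg_int.mul_continuousOn hl.continuousOn hΔ)
    hΔ.measurableSet fun y hy => ?_
  rw [mul_comm]
  exact mul_le_mul_of_nonneg_left (hδl y hy) (hg_nonneg y hy)

theorem DingStableWith.min_le [μ.IsOpenPosMeasure] [IsFiniteMeasureOnCompacts μ] {c : ℝ}
    (hstab : DingStableWith μ Δ l c) (hΔc : IsCompact Δ) (hΔconv : Convex ℝ Δ)
    (h0 : (0 : E) ∈ interior Δ) (hl : Continuous l) (hlc : ConcaveOn ℝ Δ l) :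
    ∀ y ∈ Δ, min c (l 0) ≤ l y := by
  intro y hy
  by_contra! hly
  obtain ⟨s, hys, hs⟩ := exists_between hly
  set g : E → ℝ := fun x => max 0 (s - l x)
  have hg_conv : ConvexOn ℝ Δ g := (convexOn_const 0 hΔconv).sup ((convexOn_const s hΔconv).sub hlc)
  have hg0 : g 0 = 0 := max_eq_left (sub_nonpos.2 (hs.le.trans (min_le_right _ _)))
  have hg_nonneg : ∀ x, 0 ≤ g x := fun x => le_max_left _ _
  have hg_int : IntegrableOn g Δ μ :=
    (continuous_const.max (continuous_const.sub hl)).continuousOn.integrableOn_compact hΔc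
  have hgl_le : ∫ x in Δ, g x * l x ∂μ ≤ s * ∫ x in Δ, g x ∂μ := by
    rw [← integral_const_mul]
    refine setIntegral_mono_on (hg_int.mul_continuousOn hl.continuousOn hΔc)
      (hg_int.const_mul s) hΔc.measurableSet fun x _ => ?_
    rcases lt_or_ge (l x) s with hx | hx
    · rw [mul_comm]
      exact mul_le_mul_of_nonneg_right hx.le (hg_nonneg x)
    · simp [g, max_eq_left (sub_nonpos.2 hx)]
  have hg_pos : 0 < ∫ x in Δ, g x ∂μ := by
    rw [setIntegral_pos_iff_support_of_nonneg_ae (ae_of_all _ hg_nonneg) hg_int]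
    refine (hΔconv.measure_inter_pos ⟨0, h0⟩ (isOpen_lt hl continuous_const)
      ⟨y, hys, hy⟩).trans_le (measure_mono (inter_subset_inter_left Δ fun x hx => ?_))
    exact (lt_max_of_lt_right (sub_pos.2 hx)).ne'
  have hcs := hstab g hg_conv hg0 (fun x _ => hg_nonneg x) hg_int
  rw [hg0, neg_zero, zero_add] at hcs
  exact (hs.trans_le (min_le_left _ _)).not_ge (le_of_mul_le_mul_right (hcs.trans hgl_le) hg_pos)

end Measure

theorem exists_linearMap_eq_add_const {n : ℕ} {l : (Fin n → ℝ) → ℝ}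
    (hla : ∃ a : Fin n → ℝ, ∃ c : ℝ, ∀ y, l y = (∑ i, a i * y i) + c) :
    ∃ φ : (Fin n → ℝ) →ₗ[ℝ] ℝ, ∃ b : ℝ, l = fun y => φ y + b := by
  obtain ⟨a, b, hl⟩ := hla
  exact ⟨∑ i, a i • LinearMap.proj i, b, funext fun y => by simp [hl]⟩

theorem uniform_relative_ding_stable_iff_general {n : ℕ} (Δ : Set (Fin n → ℝ))
    (hΔc : IsCompact Δ) (hΔconv : Convex ℝ Δ)
    (h0 : (0 : Fin n → ℝ) ∈ interior Δ)
    (l : (Fin n → ℝ) → ℝ)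
    (hla : ∃ a : Fin n → ℝ, ∃ c : ℝ, ∀ y, l y = (∑ i, a i * y i) + c)
    (hl1 : ∫ y in Δ, l y = 1) :
    (∃ c : ℝ, 0 < c ∧ ∀ g : (Fin n → ℝ) → ℝ, ConvexOn ℝ Δ g →
        g 0 = 0 → (∀ y ∈ Δ, 0 ≤ g y) → IntegrableOn g Δ →
        c * ∫ y in Δ, g y ≤ -g 0 + ∫ y in Δ, g y * l y) ↔
    (∃ δ : ℝ, 0 < δ ∧ ∀ y ∈ Δ, δ ≤ l y) := by
  obtain ⟨φ, b, hlφ⟩ := exists_linearMap_eq_add_const hla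
  have hl : Continuous l := hlφ ▸ φ.continuous_of_finiteDimensional.add continuous_const
  have hlc : ConcaveOn ℝ Δ l := hlφ ▸ (φ.concaveOn hΔconv).add (concaveOn_const b hΔconv)
  change (∃ c, 0 < c ∧ DingStableWith volume Δ l c) ↔ _
  constructor
  · rintro ⟨c, hc, hstab⟩
    have hmin := hstab.min_le hΔc hΔconv h0 hl hlc
    have hl0 : 0 < l 0 := by
      by_contra! hl0
      have hmin0 : IsMinOn l Δ 0 := fun y hy =>
        (min_eq_right (hl0.trans hc.le)).symm.trans_le (hmin y hy)
      have := setIntegral_nonpos (μ := volume) hΔc.measurableSet fun y hy =>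
        (hlc.le_of_isMinOn_of_mem_interior h0 hmin0 hy).trans hl0
      linarith
    exact ⟨min c (l 0), lt_min hc hl0, hmin⟩
  · rintro ⟨δ, hδ, hδl⟩
    exact ⟨δ, hδ, dingStableWith_of_le hΔc hl hδl⟩

/-- Uniform relative Ding stability: there is `c > 0` with
`I_l(g) ≥ c∫_Δ g` for all normalized convex `g` iff `inf_Δ l > 0`. -/
theorem uniform_relative_ding_stable_iff {n : ℕ} (Δ : Set (Fin n → ℝ))
    (hΔc : IsCompact Δ) (hΔconv : Convex ℝ Δ)
    (h0 : (0 : Fin n → ℝ) ∈ interior Δ)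
    (l : (Fin n → ℝ) → ℝ)
    (hla : ∃ a : Fin n → ℝ, ∃ c : ℝ, ∀ y, l y = (∑ i, a i * y i) + c)
    (hl1 : ∫ y in Δ, l y = 1)
    (hlm : ∀ i : Fin n, ∫ y in Δ, y i * l y = 0) :
    (∃ c : ℝ, 0 < c ∧ ∀ g : (Fin n → ℝ) → ℝ, ConvexOn ℝ Δ g →
        g 0 = 0 → (∀ y ∈ Δ, 0 ≤ g y) → IntegrableOn g Δ →
        c * ∫ y in Δ, g y ≤ -g 0 + ∫ y in Δ, g y * l y) ↔
    (∃ δ : ℝ, 0 < δ ∧ ∀ y ∈ Δ, δ ≤ l y) :=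
  uniform_relative_ding_stable_iff_general Δ hΔc hΔconv h0 l hla hl1
end

section
/- Let Δ ⊂ ℝⁿ be a compact convex polytope with 0 in its interior. Let B be the set of functions A ∈ L²(Δ) with A ≥ 0, ∫_Δ A = 1, ∫_Δ y_i A = 0 for all i. Suppose B ∈ B is convex on the interior of Δ and satisfies ∫_Δ B² = B(0). Then for every A ∈ B one has ‖B‖_{L²(Δ)} ≤ ‖A‖_{L²(Δ)}, with equality only if A = B (as L² functions). That is, B is the unique element of B of minimal L² norm. -/
open MeasureTheory Filter Topology Set
open scoped ENNReal NNReal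

private lemma convexOn_of_interior {n : ℕ} (Δ : Set (Fin n → ℝ)) (hΔconv : Convex ℝ Δ)
    (h0 : (0 : Fin n → ℝ) ∈ interior Δ) (B : (Fin n → ℝ) → ℝ)
    (hBconv : ConvexOn ℝ (interior Δ) B) (hBcont : ContinuousOn B Δ) :
    ConvexOn ℝ Δ B := by
  have h0Δ : (0 : Fin n → ℝ) ∈ Δ := interior_subset h0
  have hmem : ∀ z ∈ Δ, ∀ s : ℝ, s ∈ Set.Icc (0:ℝ) 1 → s • z ∈ Δ := by
    intro z hz s hs
    have := hΔconv h0Δ hz (by linarith [hs.2] : (0:ℝ) ≤ 1 - s) hs.1 (by ring)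
    simpa using this
  have hint : ∀ z ∈ Δ, ∀ s : ℝ, s ∈ Set.Ico (0:ℝ) 1 → s • z ∈ interior Δ := by
    intro z hz s hs
    have := hΔconv.combo_interior_closure_mem_interior h0 (subset_closure hz)
      (by linarith [hs.2] : (0:ℝ) < 1 - s) hs.1 (by ring)
    simpa using this
  have htend : ∀ z ∈ Δ, Tendsto (fun s : ℝ => B (s • z)) (𝓝[<] 1) (𝓝 (B z)) := by
    intro z hz
    have h1 : Tendsto (fun s : ℝ => s • z) (𝓝[<] 1) (𝓝[Δ] z) := by
      rw [tendsto_nhdsWithin_iff]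
      constructor
      · have hc : Continuous (fun s : ℝ => s • z) := continuous_id.smul continuous_const
        exact (hc.tendsto' 1 z (one_smul ℝ z)).mono_left nhdsWithin_le_nhds
      · filter_upwards [Ioo_mem_nhdsLT_of_mem (by norm_num : (1:ℝ) ∈ Set.Ioc 0 1)]
          with s hs
        exact hmem z hz s ⟨hs.1.le, hs.2.le⟩
    exact ((hBcont z hz).tendsto.comp h1)
  refine ⟨hΔconv, fun x hx y hy a b ha hb hab => ?_⟩
  have key : ∀ᶠ s in 𝓝[<] (1:ℝ),
      B (s • (a • x + b • y)) ≤ a * B (s • x) + b * B (s • y) := by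
    filter_upwards [Ioo_mem_nhdsLT_of_mem (by norm_num : (1:ℝ) ∈ Set.Ioc 0 1)]
      with s hs
    have hxs := hint x hx s ⟨hs.1.le, hs.2⟩
    have hys := hint y hy s ⟨hs.1.le, hs.2⟩
    have := hBconv.2 hxs hys ha hb hab
    have heq : a • (s • x) + b • (s • y) = s • (a • x + b • y) := by
      simp [smul_smul, smul_add, mul_comm]
    rw [heq] at this
    simpa using this
  have hABmem : a • x + b • y ∈ Δ := hΔconv hx hy ha hb hab
  have t1 := htend _ hABmem
  have t2 := ((htend x hx).const_mul a).add ((htend y hy).const_mul b)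
  exact le_of_tendsto_of_tendsto t1 t2 key

private lemma jensen_key {n : ℕ} (Δ : Set (Fin n → ℝ)) (hΔc : IsCompact Δ)
    (h0 : (0 : Fin n → ℝ) ∈ interior Δ)
    (B : (Fin n → ℝ) → ℝ)
    (hBconvΔ : ConvexOn ℝ Δ B) (hBcont : ContinuousOn B Δ)
    (A : (Fin n → ℝ) → ℝ) (hAint : IntegrableOn A Δ)
    (hA0 : ∀ᵐ y ∂(volume.restrict Δ), 0 ≤ A y)
    (hA1 : ∫ y in Δ, A y = 1) (hAm : ∀ i : Fin n, ∫ y in Δ, y i * A y = 0) :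
    B 0 ≤ ∫ y in Δ, A y * B y := by
  have hΔmeas : MeasurableSet Δ := hΔc.isClosed.measurableSet
  have h0Δ : (0 : Fin n → ℝ) ∈ Δ := interior_subset h0
  obtain ⟨M, hM⟩ := hΔc.exists_bound_of_continuousOn hBcont
  obtain ⟨R, hR⟩ := hΔc.exists_bound_of_continuousOn (continuousOn_id (s := Δ))
  set μ := volume.restrict Δ with hμ
  have hAmeas : AEMeasurable A μ := hAint.aemeasurable
  have hAnn : AEMeasurable (fun y => (A y).toNNReal) μ :=
    measurable_real_toNNReal.comp_aemeasurable hAmeas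
  set ν := μ.withDensity (fun y => ((A y).toNNReal : ℝ≥0∞)) with hν
  have hac : ν ≪ μ := withDensity_absolutelyContinuous _ _
  have haeΔν : ∀ᵐ y ∂ν, y ∈ Δ := hac.ae_le (ae_restrict_mem hΔmeas)
  have hcoe : ∀ᵐ y ∂μ, ((A y).toNNReal : ℝ) = A y := by
    filter_upwards [hA0] with y hy using Real.coe_toNNReal _ hy
  have hprob : IsProbabilityMeasure ν := by
    constructor
    rw [hν, withDensity_apply _ MeasurableSet.univ, Measure.restrict_univ]
    have h1 : (fun y => ((A y).toNNReal : ℝ≥0∞)) = fun y => ENNReal.ofReal (A y) := rfl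
    rw [h1, ← ofReal_integral_eq_lintegral_ofReal hAint hA0, hA1, ENNReal.ofReal_one]
  -- integrability of id w.r.t. ν
  have hfi : Integrable (fun y : Fin n → ℝ => y) ν := by
    rw [hν, integrable_withDensity_iff_integrable_smul₀ hAnn]
    have hsm : AEStronglyMeasurable (fun y : Fin n → ℝ => A y • y) μ :=
      (hAmeas.smul aemeasurable_id).aestronglyMeasurable
    have : Integrable (fun y : Fin n → ℝ => A y • y) μ := by
      refine Integrable.mono' (hAint.abs.const_mul R) hsm ?_
      filter_upwards [ae_restrict_mem hΔmeas] with y hy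
      rw [norm_smul]
      calc ‖A y‖ * ‖y‖ ≤ ‖A y‖ * R := by
            exact mul_le_mul_of_nonneg_left (by simpa using hR y hy) (norm_nonneg _)
        _ = R * |A y| := by rw [Real.norm_eq_abs]; ring
    refine this.congr ?_
    filter_upwards [hcoe] with y hy
    simp [NNReal.smul_def, hy]
  have hgi : Integrable (B ∘ (fun y : Fin n → ℝ => y)) ν := by
    rw [hν, integrable_withDensity_iff_integrable_smul₀ hAnn]
    have hBaem : AEMeasurable B μ := hBcont.aemeasurable hΔmeas
    have hsm : AEStronglyMeasurable (fun y => ((A y).toNNReal : ℝ) • B y) μ :=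
      ((hAnn.coe_nnreal_real).smul hBaem).aestronglyMeasurable
    refine Integrable.mono' (hAint.abs.const_mul M) hsm ?_
    filter_upwards [ae_restrict_mem hΔmeas, hcoe] with y hy hc
    simp only [Function.comp_apply, NNReal.smul_def, smul_eq_mul, Real.norm_eq_abs, abs_mul, hc]
    calc |A y| * |B y| ≤ |A y| * M := by
          exact mul_le_mul_of_nonneg_left (by simpa [Real.norm_eq_abs] using hM y hy) (abs_nonneg _)
      _ = M * |A y| := by ring
  have hbary : ∫ y, (fun y : Fin n → ℝ => y) y ∂ν = 0 := by
    funext i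
    have h1 : (∫ y, (fun y : Fin n → ℝ => y) y ∂ν) i
        = ∫ y, (ContinuousLinearMap.proj (R := ℝ) (φ := fun _ : Fin n => ℝ) i)
            ((fun y : Fin n → ℝ => y) y) ∂ν := by
      rw [ContinuousLinearMap.integral_comp_comm _ hfi]
      rfl
    have h2 : ∫ y, (ContinuousLinearMap.proj (R := ℝ) (φ := fun _ : Fin n => ℝ) i)
            ((fun y : Fin n → ℝ => y) y) ∂ν = ∫ y, y i ∂ν := rfl
    rw [h1, h2, hν, integral_withDensity_eq_integral_smul₀ hAnn]
    have h3 : ∫ y, (A y).toNNReal • y i ∂μ = ∫ y, y i * A y ∂μ := by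
      refine integral_congr_ae ?_
      filter_upwards [hcoe] with y hy
      simp [NNReal.smul_def, hy, mul_comm]
    rw [h3, hAm i]
    rfl
  have hjen := hBconvΔ.map_integral_le hBcont hΔc.isClosed haeΔν hfi hgi
  rw [hbary] at hjen
  refine le_trans hjen ?_
  have h4 : ∫ y, (B ∘ fun y : Fin n → ℝ => y) y ∂ν = ∫ y, A y * B y ∂μ := by
    rw [hν, integral_withDensity_eq_integral_smul₀ hAnn]
    refine integral_congr_ae ?_
    filter_upwards [hcoe] with y hy
    simp [NNReal.smul_def, hy]
  rw [← h4]
  rfl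

/-- The convex balancing function `B` (nonnegative, mass 1, barycenter 0,
`∫_Δ B² = B(0)`) has minimal `L²`-norm among all balancing densities, and is
the unique such minimizer (up to a.e. equality). -/
theorem balancing_min_l2_norm {n : ℕ} (Δ : Set (Fin n → ℝ))
    (hΔc : IsCompact Δ) (hΔconv : Convex ℝ Δ)
    (h0 : (0 : Fin n → ℝ) ∈ interior Δ)
    (B : (Fin n → ℝ) → ℝ)
    (hBconv : ConvexOn ℝ (interior Δ) B) (hBcont : ContinuousOn B Δ)
    (hBpos : ∀ y ∈ Δ, 0 ≤ B y)
    (hB1 : ∫ y in Δ, B y = 1)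
    (hBm : ∀ i : Fin n, ∫ y in Δ, y i * B y = 0)
    (hBsq : ∫ y in Δ, (B y) ^ 2 = B 0) :
    ∀ A : (Fin n → ℝ) → ℝ, IntegrableOn A Δ → IntegrableOn (fun y => (A y) ^ 2) Δ →
      (∀ᵐ y ∂(volume.restrict Δ), 0 ≤ A y) →
      (∫ y in Δ, A y = 1) → (∀ i : Fin n, ∫ y in Δ, y i * A y = 0) →
      (∫ y in Δ, (B y) ^ 2 ≤ ∫ y in Δ, (A y) ^ 2) ∧
      ((∫ y in Δ, (B y) ^ 2 = ∫ y in Δ, (A y) ^ 2) →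
        A =ᵐ[volume.restrict Δ] B) := by
  intro A hAint hA2int hA0 hA1 hAm
  have hΔmeas : MeasurableSet Δ := hΔc.isClosed.measurableSet
  have hBconvΔ : ConvexOn ℝ Δ B := convexOn_of_interior Δ hΔconv h0 B hBconv hBcont
  have key : ∫ y in Δ, (B y) ^ 2 ≤ ∫ y in Δ, A y * B y := by
    rw [hBsq]
    exact jensen_key Δ hΔc h0 B hBconvΔ hBcont A hAint hA0 hA1 hAm
  obtain ⟨M, hM⟩ := hΔc.exists_bound_of_continuousOn hBcont
  have hBaem : AEMeasurable B (volume.restrict Δ) := hBcont.aemeasurable hΔmeas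
  have hAmeas : AEMeasurable A (volume.restrict Δ) := hAint.aemeasurable
  have intB2 : IntegrableOn (fun y => (B y) ^ 2) Δ :=
    (hBcont.pow 2).integrableOn_compact hΔc
  have intAB : IntegrableOn (fun y => A y * B y) Δ := by
    refine Integrable.mono' (hAint.abs.const_mul M)
      ((hAmeas.mul hBaem).aestronglyMeasurable) ?_
    filter_upwards [ae_restrict_mem hΔmeas] with y hy
    rw [Real.norm_eq_abs, abs_mul]
    calc |A y| * |B y| ≤ |A y| * M :=
          mul_le_mul_of_nonneg_left (by simpa [Real.norm_eq_abs] using hM y hy) (abs_nonneg _)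
      _ = M * |A y| := by ring
  have hfun : (fun y => (A y - B y) ^ 2)
      = fun y => ((A y) ^ 2 - 2 * (A y * B y)) + (B y) ^ 2 := by
    funext y; ring
  have hsubint : IntegrableOn (fun y => (A y - B y) ^ 2) Δ := by
    rw [hfun]
    exact (hA2int.sub (intAB.const_mul 2)).add intB2
  have hexp : ∫ y in Δ, (A y - B y) ^ 2
      = (∫ y in Δ, (A y) ^ 2) - 2 * (∫ y in Δ, A y * B y) + ∫ y in Δ, (B y) ^ 2 := by
    have i1 : Integrable (fun y => A y ^ 2 - 2 * (A y * B y)) (volume.restrict Δ) :=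
      hA2int.sub (intAB.const_mul 2)
    rw [hfun, integral_add i1 intB2, integral_sub hA2int (intAB.const_mul 2),
      integral_const_mul]
  have hnn : 0 ≤ ∫ y in Δ, (A y - B y) ^ 2 :=
    setIntegral_nonneg hΔmeas fun y _ => sq_nonneg _
  constructor
  · linarith
  · intro heq
    have hz : ∫ y in Δ, (A y - B y) ^ 2 = 0 := by linarith
    have := (integral_eq_zero_iff_of_nonneg_ae
      (Eventually.of_forall fun y => sq_nonneg (A y - B y)) hsubint).mp hz
    filter_upwards [this] with y hy
    have : (A y - B y) ^ 2 = 0 := hy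
    have := pow_eq_zero_iff (two_ne_zero) |>.mp this
    linarith [this]
end

section
/- Let Δ ⊂ ℝⁿ be a compact convex polytope with 0 in its interior, and let B : Δ → ℝ be a nonnegative convex continuous function with ∫_Δ B = 1, ∫_Δ y_i B = 0 for all i, and ∫_Δ B² = B(0). Then B is affine on the convex hull of the set {B > 0}, the set {y ∈ Δ : B(y) > 0} is convex, and consequently B = max{0, h} for some affine function h on ℝⁿ (i.e. B is a simple convex function). -/
open MeasureTheory Set Filter Topology

/-!
A supporting hyperplane of the convex function `B` at the interior point `0` gives an affine
minorant `L = B 0 + ψ ≤ B` on `Δ`. The barycenter conditions give `∫ L B = L 0 = B 0 = ∫ B²`, so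
the nonnegative continuous function `(B - L) B` has integral zero and vanishes on `Δ`, which is
the closure of its interior: `B = L` wherever `B > 0`. Hence `{B > 0} = {L > 0} ∩ Δ` is convex
(so it is its own convex hull) and `B = max 0 L` on `Δ`.
-/

section Epigraph

variable {E : Type*} [TopologicalSpace E] {s : Set E} {f : E → ℝ}

theorem mk_notMem_interior_epigraph (x : E) :
    (x, f x) ∉ interior {p : E × ℝ | p.1 ∈ s ∧ f p.1 ≤ p.2} := by
  intro hx
  have hfib : ∀ᶠ t in 𝓝 (f x), f x ≤ t :=
    Filter.mem_of_superset ((Continuous.prodMk_right x).continuousAt.preimage_mem_nhds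
      (mem_interior_iff_mem_nhds.mp hx)) fun _ ht => ht.2
  obtain ⟨t, hlt, hge⟩ := ((frequently_lt_nhds (f x)).and_eventually hfib).exists
  exact hlt.not_ge hge

theorem mk_mem_interior_epigraph_of_continuousAt {x : E} (hx : x ∈ interior s)
    (hfx : ContinuousAt f x) {t : ℝ} (ht : f x < t) :
    (x, t) ∈ interior {p : E × ℝ | p.1 ∈ s ∧ f p.1 ≤ p.2} := by
  obtain ⟨m, hxm, hmt⟩ := exists_between ht
  refine mem_interior_iff_mem_nhds.mpr (mem_of_superset (prod_mem_nhds
    (inter_mem (mem_interior_iff_mem_nhds.mp hx) (hfx.eventually (gt_mem_nhds hxm)))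
    (Ioi_mem_nhds hmt)) ?_)
  rintro ⟨y, u⟩ ⟨⟨hys, hym⟩, hmu⟩
  exact ⟨hys, (lt_trans hym hmu).le⟩

end Epigraph

theorem ConvexOn.exists_subgradient_of_continuousAt {E : Type*} [NormedAddCommGroup E]
    [NormedSpace ℝ E] {s : Set E} {f : E → ℝ} {x : E} (hf : ConvexOn ℝ s f)
    (hx : x ∈ interior s) (hfx : ContinuousAt f x) :
    ∃ ψ : StrongDual ℝ E, ∀ y ∈ s, f x + ψ (y - x) ≤ f y := by
  set K := {p : E × ℝ | p.1 ∈ s ∧ f p.1 ≤ p.2}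
  have hxK : (x, f x + 1) ∈ interior K :=
    mk_mem_interior_epigraph_of_continuousAt hx hfx (lt_add_one _)
  obtain ⟨φ, hφ⟩ := geometric_hahn_banach_open_point hf.convex_epigraph.interior
    isOpen_interior (mk_notMem_interior_epigraph x)
  have hφK : ∀ p ∈ K, φ p ≤ φ (x, f x) := by
    intro p hp
    have hcl : p ∈ closure (interior K) := by
      rw [hf.convex_epigraph.closure_interior_eq_closure_of_nonempty_interior ⟨_, hxK⟩]
      exact subset_closure hp
    exact closure_minimal (fun q hq => (hφ q hq).le)
      (isClosed_le φ.continuous continuous_const) hcl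
  have hsplit : ∀ (y : E) (t : ℝ), φ (y, t) = φ (y, 0) + t * φ (0, 1) := fun y t => by
    rw [show ((y, t) : E × ℝ) = (y, 0) + t • (0, 1) by ext <;> simp, map_add, map_smul,
      smul_eq_mul]
  set β := φ (0, 1)
  have hβ : β < 0 := by
    have := hφ _ hxK
    rw [hsplit x, hsplit x (f x)] at this
    linarith
  refine ⟨-β⁻¹ • φ.comp (ContinuousLinearMap.inl ℝ E ℝ), fun y hy => ?_⟩
  have hy := hφK (y, f y) ⟨hy, le_rfl⟩
  rw [hsplit y, hsplit x (f x)] at hy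
  have hsub : φ (y - x, 0) = φ (y, 0) - φ (x, 0) := by
    rw [← map_sub, Prod.mk_sub_mk, sub_zero]
  simp only [smul_apply, ContinuousLinearMap.comp_apply,
    ContinuousLinearMap.inl_apply, hsub, smul_eq_mul]
  have : β⁻¹ * (φ (y, 0) - φ (x, 0)) ≥ f x - f y := by
    rw [ge_iff_le, ← div_eq_inv_mul, le_div_iff_of_neg hβ]; linarith
  linarith

theorem ContinuousOn.eqOn_zero_of_setIntegral_eq_zero {X : Type*} [TopologicalSpace X]
    [MeasurableSpace X] {μ : Measure X} [μ.IsOpenPosMeasure] {s : Set X} {g : X → ℝ}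
    (hg : ContinuousOn g s) (hs : MeasurableSet s) (hsi : s ⊆ closure (interior s))
    (hint : IntegrableOn g s μ) (hnn : ∀ x ∈ s, 0 ≤ g x) (h : ∫ x in s, g x ∂μ = 0) :
    EqOn g 0 s :=
  Measure.eqOn_of_ae_eq
    ((setIntegral_eq_zero_iff_of_nonneg_ae (ae_restrict_of_forall_mem hs hnn) hint).mp h)
    hg continuousOn_const hsi

theorem eq_of_pos_of_setIntegral_sq_eq_setIntegral_mul {X : Type*} [TopologicalSpace X]
    [T2Space X] [MeasurableSpace X] [OpensMeasurableSpace X] {μ : Measure X}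
    [μ.IsOpenPosMeasure] [IsFiniteMeasureOnCompacts μ] {s : Set X} {B L : X → ℝ}
    (hs : IsCompact s) (hsi : s ⊆ closure (interior s)) (hB : ContinuousOn B s)
    (hL : ContinuousOn L s) (hnn : ∀ x ∈ s, 0 ≤ B x) (hle : ∀ x ∈ s, L x ≤ B x)
    (h : ∫ x in s, B x ^ 2 ∂μ = ∫ x in s, L x * B x ∂μ) {x : X} (hx : x ∈ s) (hBx : 0 < B x) :
    B x = L x := by
  have hgap : ∫ y in s, (B y - L y) * B y ∂μ = 0 := by
    simp_rw [sub_mul, ← sq]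
    rw [integral_sub (f := fun y => B y ^ 2) ((hB.pow 2).integrableOn_compact hs)
      (g := fun y => L y * B y) ((hL.mul hB).integrableOn_compact hs), h, sub_self]
  have hvanish := ((hB.sub hL).mul hB).eqOn_zero_of_setIntegral_eq_zero hs.measurableSet hsi
    (((hB.sub hL).mul hB).integrableOn_compact hs)
    (fun y hy => mul_nonneg (sub_nonneg.2 (hle y hy)) (hnn y hy)) hgap
  exact sub_eq_zero.mp ((mul_eq_zero.mp (hvanish hx)).resolve_right hBx.ne')

theorem LinearMap.pi_apply_eq_sum_apply_single_mul {ι : Type*} [Fintype ι] [DecidableEq ι]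
    (ψ : (ι → ℝ) →ₗ[ℝ] ℝ) (y : ι → ℝ) :
    ψ y = ∑ i, ψ (Pi.single i 1) * y i := by
  conv_lhs => rw [ψ.pi_apply_eq_sum_univ y]
  refine Finset.sum_congr rfl fun i _ => ?_
  rw [smul_eq_mul, mul_comm]
  congr 2
  ext j
  simp [Pi.single_apply, eq_comm]

theorem integral_affine_mul_eq_of_moments {ι : Type*} [Fintype ι] {μ : Measure (ι → ℝ)}
    {B : (ι → ℝ) → ℝ} (c : ℝ) (ψ : (ι → ℝ) →ₗ[ℝ] ℝ) (hB : Integrable B μ)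
    (hint : ∀ i, Integrable (fun y => y i * B y) μ) (hB1 : ∫ y, B y ∂μ = 1)
    (hm : ∀ i, ∫ y, y i * B y ∂μ = 0) :
    ∫ y, (c + ψ y) * B y ∂μ = c := by
  classical
  have hexp : ∀ y, (c + ψ y) * B y = c * B y + ∑ i, ψ (Pi.single i 1) * (y i * B y) :=
    fun y => by
      rw [add_mul, ψ.pi_apply_eq_sum_apply_single_mul y, Finset.sum_mul]
      exact congrArg _ (Finset.sum_congr rfl fun i _ => mul_assoc _ _ _)
  have hint' : ∀ i ∈ Finset.univ, Integrable (fun y => ψ (Pi.single i 1) * (y i * B y)) μ :=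
    fun i _ => (hint i).const_mul _
  simp_rw [hexp]
  rw [integral_add (hB.const_mul c) (integrable_finsetSum _ hint'), integral_finsetSum _ hint']
  simp [integral_const_mul, hm, hB1]

section Minorant

variable {α : Type*} {s : Set α} {B L : α → ℝ}

theorem setOf_pos_eq_of_le_of_eq (hle : ∀ x ∈ s, L x ≤ B x)
    (heq : ∀ x ∈ s, 0 < B x → B x = L x) :
    {x ∈ s | 0 < B x} = {x ∈ s | 0 < L x} := by
  ext x
  constructor
  · rintro ⟨hx, hB⟩
    exact ⟨hx, heq x hx hB ▸ hB⟩
  · rintro ⟨hx, hL⟩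
    exact ⟨hx, hL.trans_le (hle x hx)⟩

theorem eq_max_zero_of_le_of_eq (hnn : ∀ x ∈ s, 0 ≤ B x) (hle : ∀ x ∈ s, L x ≤ B x)
    (heq : ∀ x ∈ s, 0 < B x → B x = L x) {x : α} (hx : x ∈ s) :
    B x = max 0 (L x) := by
  rcases (hnn x hx).lt_or_eq with hB | hB
  · rw [← heq x hx hB, max_eq_right hB.le]
  · rw [← hB, max_eq_left (hB ▸ hle x hx)]

end Minorant

/-- A nonnegative convex continuous balancing function `B` on `Δ` with
`∫_Δ B² = B(0)` is affine on the convex hull of `{B > 0}`, the set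
`{y ∈ Δ | B(y) > 0}` is convex, and `B = max{0, h}` on `Δ` for some affine
function `h` (i.e. `B` is a simple convex function). -/
theorem balancing_is_simple {n : ℕ} (Δ : Set (Fin n → ℝ))
    (hΔc : IsCompact Δ) (hΔconv : Convex ℝ Δ)
    (h0 : (0 : Fin n → ℝ) ∈ interior Δ)
    (B : (Fin n → ℝ) → ℝ)
    (hBconv : ConvexOn ℝ Δ B) (hBcont : ContinuousOn B Δ)
    (hBpos : ∀ y ∈ Δ, 0 ≤ B y)
    (hB1 : ∫ y in Δ, B y = 1)
    (hBm : ∀ i : Fin n, ∫ y in Δ, y i * B y = 0)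
    (hBsq : ∫ y in Δ, (B y) ^ 2 = B 0) :
    (∃ a : Fin n → ℝ, ∃ c : ℝ,
      ∀ y ∈ convexHull ℝ {y ∈ Δ | 0 < B y}, B y = (∑ i, a i * y i) + c) ∧
    Convex ℝ {y ∈ Δ | 0 < B y} ∧
    (∃ a : Fin n → ℝ, ∃ c : ℝ,
      ∀ y ∈ Δ, B y = max 0 ((∑ i, a i * y i) + c)) := by
  obtain ⟨ψ, hψ⟩ := hBconv.exists_subgradient_of_continuousAt h0
    (hBcont.continuousAt (mem_interior_iff_mem_nhds.mp h0))
  set L : (Fin n → ℝ) → ℝ := fun y => B 0 + ψ y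
  have hle : ∀ y ∈ Δ, L y ≤ B y := fun y hy => by simpa using hψ y hy
  have hLB : ∫ y in Δ, L y * B y = B 0 :=
    integral_affine_mul_eq_of_moments (B 0) ψ.toLinearMap (hBcont.integrableOn_compact hΔc)
      (fun i => ((continuous_apply i).continuousOn.mul hBcont).integrableOn_compact hΔc) hB1 hBm
  have heq : ∀ y ∈ Δ, 0 < B y → B y = L y := fun y hy hBy =>
    eq_of_pos_of_setIntegral_sq_eq_setIntegral_mul (L := L) hΔc
      (hΔconv.closure_interior_eq_closure_of_nonempty_interior ⟨0, h0⟩ ▸ subset_closure) hBcont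
      (continuous_const.add ψ.continuous).continuousOn hBpos hle (by rw [hBsq, hLB]) hy hBy
  have hconv : Convex ℝ {y ∈ Δ | 0 < B y} := by
    rw [setOf_pos_eq_of_le_of_eq hle heq]
    exact ((concaveOn_const _ hΔconv).add (ψ.toLinearMap.concaveOn hΔconv)).convex_gt 0
  set a : Fin n → ℝ := fun i => ψ (Pi.single i 1)
  have hLsum : ∀ y, L y = ∑ i, a i * y i + B 0 := fun y =>
    (add_comm _ _).trans
      (congrArg (· + B 0) (ψ.toLinearMap.pi_apply_eq_sum_apply_single_mul y))
  refine ⟨⟨a, B 0, fun y hy => ?_⟩, hconv, ⟨a, B 0, fun y hy => ?_⟩⟩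
  · rw [hconv.convexHull_eq] at hy
    rw [← hLsum, heq y hy.1 hy.2]
  · rw [← hLsum]
    exact eq_max_zero_of_le_of_eq hBpos hle heq hy
end

section
/- Let Δ ⊂ ℝⁿ be a compact convex polytope with 0 in its interior, let l be its Ricci affine function, and let B ∈ L²(Δ) be convex on Δ°, satisfying B ≥ 0, ∫_Δ B h dy = h(0) for all affine h (so I_B(h) = 0), and ∫_Δ B² = B(0). Set g₀ = B - |Δ|^{-1}. Then for every nonzero convex g ∈ L²(Δ), -I(g)/‖g‖₂ ≤ ‖|Δ|^{-1} - B‖₂, where I(g) = -g(0) + |Δ|^{-1}∫_Δ g dy, and equality holds for g = g₀ (when B ≠ |Δ|^{-1}). Hence sup over nonzero convex g of -I(g)/‖g‖₂ equals ‖|Δ|^{-1} - B‖₂. -/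
/-!
A convex `g` has a supporting affine function at the interior point `0` (Hahn–Banach applied to
its strict epigraph). Since `B dy` is a probability measure on `Δ` with barycenter `0`, integrating
this minorant against `B` gives `g 0 ≤ ∫ g B` (Jensen), hence
`g 0 - |Δ|⁻¹ ∫ g ≤ ∫ g (B - |Δ|⁻¹) ≤ ‖g‖₂ ‖B - |Δ|⁻¹‖₂` by Cauchy–Schwarz. For `g₀ = B - |Δ|⁻¹`
one has `∫ g₀ = 0` and `∫ g₀² = ∫ B² - |Δ|⁻¹ = g₀ 0`, so both sides equal `‖g₀‖₂²`.
-/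

open MeasureTheory
open scoped ENNReal

theorem integral_mul_le_sqrt_mul_sqrt {α : Type*} [MeasurableSpace α] {μ : Measure α}
    {f g : α → ℝ} (hf : MemLp f 2 μ) (hg : MemLp g 2 μ) :
    ∫ a, f a * g a ∂μ ≤ √(∫ a, f a ^ 2 ∂μ) * √(∫ a, g a ^ 2 ∂μ) := by
  have hinner : ∀ {u v : α → ℝ} (hu : MemLp u 2 μ) (hv : MemLp v 2 μ),
      inner ℝ (hu.toLp u) (hv.toLp v) = ∫ a, u a * v a ∂μ := by
    intro u v hu hv
    rw [L2.inner_def]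
    refine integral_congr_ae ?_
    filter_upwards [hu.coeFn_toLp, hv.coeFn_toLp] with a hua hva
    simp [hua, hva, mul_comm]
  have hnorm : ∀ {u : α → ℝ} (hu : MemLp u 2 μ), ‖hu.toLp u‖ = √(∫ a, u a ^ 2 ∂μ) := by
    intro u hu
    simp_rw [norm_eq_sqrt_real_inner, hinner, sq]
  rw [← hinner hf hg, ← hnorm hf, ← hnorm hg]
  exact real_inner_le_norm _ _

section

variable {E : Type*} [NormedAddCommGroup E] [NormedSpace ℝ E] [FiniteDimensional ℝ E]
  {s : Set E} {g : E → ℝ} {x : E}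

theorem ConvexOn.exists_subgradient_on_interior (hg : ConvexOn ℝ s g) (hx : x ∈ interior s) :
    ∃ f : StrongDual ℝ E, ∀ y ∈ interior s, g x + f (y - x) ≤ g y := by
  set U : Set (E × ℝ) := {p | p.1 ∈ interior s ∧ g p.1 < p.2}
  have hU_convex : Convex ℝ U :=
    (hg.subset interior_subset hg.1.interior).convex_strict_epigraph
  have hU_open : IsOpen U := by
    have hcont : ContinuousOn (fun p : E × ℝ => p.2 - g p.1) (interior s ×ˢ Set.univ) :=
      continuousOn_snd.sub (hg.continuousOn_interior.comp continuousOn_fst fun p hp => hp.1)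
    have := hcont.isOpen_inter_preimage (isOpen_interior.prod isOpen_univ) (isOpen_Ioi (a := 0))
    convert this using 1
    ext p
    simp [U, sub_pos]
  obtain ⟨F, hF⟩ := geometric_hahn_banach_open_point hU_convex hU_open
    (show (x, g x) ∉ U from fun h => lt_irrefl _ h.2)
  set φ : StrongDual ℝ E := F.comp (ContinuousLinearMap.inl ℝ E ℝ)
  set b := F (0, 1)
  have hF_apply : ∀ y t, F (y, t) = φ y + t * b := fun y t => by
    change F (y, t) = F (y, 0) + t * F (0, 1)
    rw [← smul_eq_mul, ← map_smul, ← map_add]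
    simp
  have hF_lt : ∀ y ∈ interior s, ∀ t, g y < t → φ y + t * b < φ x + g x * b := fun y hy t ht => by
    simpa only [hF_apply] using hF (y, t) ⟨hy, ht⟩
  -- `b < 0`: the separating hyperplane is not vertical, so it is the graph of an affine map.
  have hb : 0 < -b := by linarith [hF_lt x hx (g x + 1) (by linarith)]
  refine ⟨(-b)⁻¹ • φ, fun y hy => ?_⟩
  rw [← le_sub_iff_add_le', smul_apply, smul_eq_mul, map_sub]
  refine le_of_forall_gt_imp_ge_of_dense fun t ht => ?_
  rw [inv_mul_le_iff₀ hb]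
  linarith [hF_lt y hy (t + g x) (by linarith)]

theorem ConvexOn.exists_subgradient (hg : ConvexOn ℝ s g) (hx : x ∈ interior s) :
    ∃ f : StrongDual ℝ E, ∀ y ∈ s, g x + f (y - x) ≤ g y := by
  obtain ⟨f, hf⟩ := hg.exists_subgradient_on_interior hx
  refine ⟨f, fun y hy => ?_⟩
  -- The midpoint of `x` and `y` is interior, and convexity along the segment carries the
  -- inequality there over to `y`.
  have hmid : (1 / 2 : ℝ) • x + (1 / 2 : ℝ) • y ∈ interior s :=
    hg.1.combo_interior_self_mem_interior hx hy (by norm_num) (by norm_num) (by norm_num)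
  have hsub := hf _ hmid
  have hconv := hg.2 (interior_subset hx) hy (by norm_num) (by norm_num)
    (by norm_num : (1 / 2 : ℝ) + 1 / 2 = 1)
  rw [show (1 / 2 : ℝ) • x + (1 / 2 : ℝ) • y - x = (1 / 2 : ℝ) • (y - x) by module, map_smul,
    smul_eq_mul] at hsub
  simp only [smul_eq_mul] at hconv
  linarith

variable [MeasurableSpace E] [BorelSpace E] {μ : Measure E} [IsFiniteMeasureOnCompacts μ]

theorem ConvexOn.le_setIntegral_mul_of_barycenter {w : E → ℝ} (hg : ConvexOn ℝ s g)
    (hsc : IsCompact s) (hx : x ∈ interior s) (hgi : IntegrableOn g s μ) (hwc : ContinuousOn w s)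
    (hw : ∀ y ∈ s, 0 ≤ w y)
    (hbary : ∀ (f : StrongDual ℝ E) (c : ℝ), ∫ y in s, (f y + c) * w y ∂μ = f x + c) :
    g x ≤ ∫ y in s, g y * w y ∂μ := by
  obtain ⟨f, hf⟩ := hg.exists_subgradient hx
  have hfw : IntegrableOn (fun y => (f y + (g x - f x)) * w y) s μ :=
    ((f.continuous.add continuous_const).continuousOn.mul hwc).integrableOn_compact hsc
  calc g x = ∫ y in s, (f y + (g x - f x)) * w y ∂μ := by rw [hbary]; ring
    _ ≤ ∫ y in s, g y * w y ∂μ := by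
      refine setIntegral_mono_on hfw (hgi.mul_continuousOn hwc hsc) hsc.measurableSet
        fun y hy => mul_le_mul_of_nonneg_right ?_ (hw y hy)
      linarith [hf y hy, map_sub f y x]

end

section

variable {α : Type*} [MeasurableSpace α] {μ : Measure α} {s : Set α} {w : α → ℝ}

theorem setIntegral_sub_inv_measureReal (hs0 : μ s ≠ 0) (hs : μ s ≠ ∞)
    (hw : IntegrableOn w s μ) (h1 : ∫ y in s, w y ∂μ = 1) :
    ∫ y in s, (w y - (μ.real s)⁻¹) ∂μ = 0 := by
  rw [integral_sub hw (integrableOn_const hs), setIntegral_const, h1, smul_eq_mul,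
    mul_inv_cancel₀ (measureReal_ne_zero_iff hs |>.2 hs0), sub_self]

theorem setIntegral_sub_inv_measureReal_sq (hs : μ s ≠ ∞) (hw : IntegrableOn w s μ)
    (hw2 : IntegrableOn (fun y => w y ^ 2) s μ) (h1 : ∫ y in s, w y ∂μ = 1) :
    ∫ y in s, (w y - (μ.real s)⁻¹) ^ 2 ∂μ = ∫ y in s, w y ^ 2 ∂μ - (μ.real s)⁻¹ := by
  have hexpand : ∀ y, (w y - (μ.real s)⁻¹) ^ 2
      = w y ^ 2 - 2 * (μ.real s)⁻¹ * w y + ((μ.real s)⁻¹) ^ 2 := fun y => by ring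
  have hw2_sub : IntegrableOn (fun y => w y ^ 2 - 2 * (μ.real s)⁻¹ * w y) s μ :=
    hw2.sub (hw.const_mul _)
  simp_rw [hexpand]
  rw [integral_add hw2_sub (integrableOn_const hs),
    integral_sub hw2 (hw.const_mul _), integral_const_mul, h1, setIntegral_const, smul_eq_mul]
  rcases eq_or_ne (μ.real s) 0 with h | h
  · simp [h]
  · field_simp
    ring

end

theorem setIntegral_dual_add_mul_eq_of_coord {n : ℕ} {μ : Measure (Fin n → ℝ)}
    {s : Set (Fin n → ℝ)} {w : (Fin n → ℝ) → ℝ}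
    (h : ∀ (a : Fin n → ℝ) (c : ℝ), ∫ y in s, ((∑ i, a i * y i) + c) * w y ∂μ = c)
    (f : StrongDual ℝ (Fin n → ℝ)) (c : ℝ) : ∫ y in s, (f y + c) * w y ∂μ = c := by
  refine (integral_congr_ae (ae_of_all _ fun y => ?_)).trans
    (h (fun i => f fun j => if i = j then 1 else 0) c)
  congr 2
  simpa [mul_comm] using f.toLinearMap.pi_apply_eq_sum_univ y

theorem optimal_destabilizer_sup_general {n : ℕ} (Δ : Set (Fin n → ℝ))
    (hΔc : IsCompact Δ)
    (h0 : (0 : Fin n → ℝ) ∈ interior Δ)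
    (B : (Fin n → ℝ) → ℝ)
    (hBcont : ContinuousOn B Δ)
    (hBpos : ∀ y ∈ Δ, 0 ≤ B y)
    (hBaff : ∀ a : Fin n → ℝ, ∀ c : ℝ,
      ∫ y in Δ, ((∑ i, a i * y i) + c) * B y = c)
    (hBsq : ∫ y in Δ, (B y) ^ 2 = B 0) :
    (∀ g : (Fin n → ℝ) → ℝ, ConvexOn ℝ Δ g → IntegrableOn g Δ →
      IntegrableOn (fun y => (g y) ^ 2) Δ →
      g 0 - (volume Δ).toReal⁻¹ * (∫ y in Δ, g y) ≤
        Real.sqrt (∫ y in Δ, (g y) ^ 2) *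
          Real.sqrt (∫ y in Δ, ((volume Δ).toReal⁻¹ - B y) ^ 2)) ∧
    ((B ≠ fun _ => (volume Δ).toReal⁻¹) →
      (B 0 - (volume Δ).toReal⁻¹) -
          (volume Δ).toReal⁻¹ * (∫ y in Δ, (B y - (volume Δ).toReal⁻¹)) =
        Real.sqrt (∫ y in Δ, (B y - (volume Δ).toReal⁻¹) ^ 2) *
          Real.sqrt (∫ y in Δ, ((volume Δ).toReal⁻¹ - B y) ^ 2)) := by
  simp only [← measureReal_def, sub_sq_comm _ (B _)]
  have hΔ : volume Δ ≠ ∞ := hΔc.measure_lt_top.ne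
  have hB1 : ∫ y in Δ, B y = 1 := by simpa using hBaff 0 1
  have hBint : IntegrableOn B Δ := hBcont.integrableOn_compact hΔc
  refine ⟨fun g hg hgi hg2 => ?_, fun _ => ?_⟩
  · have hJensen := hg.le_setIntegral_mul_of_barycenter hΔc h0 hgi hBcont hBpos fun f c => by
      rw [map_zero, zero_add, setIntegral_dual_add_mul_eq_of_coord hBaff]
    have hg_L2 : MemLp g 2 (volume.restrict Δ) :=
      (memLp_two_iff_integrable_sq hgi.aestronglyMeasurable).2 hg2
    have hB_L2 : MemLp (fun y => B y - (volume.real Δ)⁻¹) 2 (volume.restrict Δ) :=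
      (memLp_two_iff_integrable_sq (hBint.sub (integrableOn_const hΔ)).aestronglyMeasurable).2
        (((hBcont.sub continuousOn_const).pow 2).integrableOn_compact hΔc)
    calc g 0 - (volume.real Δ)⁻¹ * ∫ y in Δ, g y
        ≤ ∫ y in Δ, g y * (B y - (volume.real Δ)⁻¹) := by
          simp only [mul_sub]
          rw [integral_sub (hgi.mul_continuousOn hBcont hΔc) (hgi.mul_const _), integral_mul_const]
          linarith
      _ ≤ _ := integral_mul_le_sqrt_mul_sqrt hg_L2 hB_L2
  · have hΔ0 : volume Δ ≠ 0 := (Measure.measure_pos_of_nonempty_interior _ ⟨0, h0⟩).ne'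
    have hvar : ∫ y in Δ, (B y - (volume.real Δ)⁻¹) ^ 2 = B 0 - (volume.real Δ)⁻¹ := by
      rw [setIntegral_sub_inv_measureReal_sq hΔ hBint
        ((hBcont.pow 2).integrableOn_compact hΔc) hB1, hBsq]
    rw [setIntegral_sub_inv_measureReal hΔ0 hΔ hBint hB1, hvar,
      Real.mul_self_sqrt (hvar ▸ integral_nonneg fun _ => sq_nonneg _), mul_zero, sub_zero]

/-- The optimal destabilizer achieves the supremum of `-I(g)/‖g‖₂`:
for every convex `g ∈ L²(Δ)`, `-I(g) = g(0) - |Δ|⁻¹∫_Δ g ≤ ‖g‖₂ · ‖|Δ|⁻¹ - B‖₂`,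
where `I(g) = -g(0) + |Δ|⁻¹ ∫_Δ g`, and equality holds for `g₀ = B - |Δ|⁻¹`;
hence the supremum of `-I(g)/‖g‖₂` over nonzero convex `g` is `‖|Δ|⁻¹ - B‖₂`. -/
theorem optimal_destabilizer_sup {n : ℕ} (Δ : Set (Fin n → ℝ))
    (hΔc : IsCompact Δ) (hΔconv : Convex ℝ Δ)
    (h0 : (0 : Fin n → ℝ) ∈ interior Δ)
    (B : (Fin n → ℝ) → ℝ)
    (hBconv : ConvexOn ℝ (interior Δ) B) (hBcont : ContinuousOn B Δ)
    (hBpos : ∀ y ∈ Δ, 0 ≤ B y)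
    (hBaff : ∀ a : Fin n → ℝ, ∀ c : ℝ,
      ∫ y in Δ, ((∑ i, a i * y i) + c) * B y = c)
    (hBsq : ∫ y in Δ, (B y) ^ 2 = B 0) :
    (∀ g : (Fin n → ℝ) → ℝ, ConvexOn ℝ Δ g → IntegrableOn g Δ →
      IntegrableOn (fun y => (g y) ^ 2) Δ →
      g 0 - (volume Δ).toReal⁻¹ * (∫ y in Δ, g y) ≤
        Real.sqrt (∫ y in Δ, (g y) ^ 2) *
          Real.sqrt (∫ y in Δ, ((volume Δ).toReal⁻¹ - B y) ^ 2)) ∧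
    ((B ≠ fun _ => (volume Δ).toReal⁻¹) →
      (B 0 - (volume Δ).toReal⁻¹) -
          (volume Δ).toReal⁻¹ * (∫ y in Δ, (B y - (volume Δ).toReal⁻¹)) =
        Real.sqrt (∫ y in Δ, (B y - (volume Δ).toReal⁻¹) ^ 2) *
          Real.sqrt (∫ y in Δ, ((volume Δ).toReal⁻¹ - B y) ^ 2)) :=
  optimal_destabilizer_sup_general Δ hΔc h0 B hBcont hBpos hBaff hBsq
end

section
/- Let Δ ⊂ ℝⁿ be a compact convex polytope with 0 in its interior, and let μ be a Borel probability measure on Δ with barycenter 0 that has a bounded density A with respect to Lebesgue measure. Then for every convex function g on Δ and every u in the space of smooth strictly convex potentials with ∇u(ℝⁿ) = Δ° and ∫ e^{-u} < ∞, one has ∫_Δ g (e^{h(u)} - |Δ| A) dy ≥ -|Δ| I_A(g), where I_A(g) = -g(0) + ∫_Δ g A dy and e^{h(u)} denotes the density of the pushforward of |Δ| e^{-u}/∫e^{-u} under ∇u. Consequently, by Cauchy–Schwarz, [∫_Δ (e^{h(u)} - |Δ| A)² dy]^{1/2} ≥ -|Δ| I_A(g)/‖g‖₂ for all nonzero convex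 g. -/
open MeasureTheory

section AuxLemmas
open MeasureTheory Filter Set


lemma limzero_atTop {f : ℝ → ℝ} (hf : Integrable f) {L : ℝ}
    (h : Tendsto f atTop (nhds L)) : L = 0 := by
  by_contra hL
  have hpos : 0 < |L| / 2 := by positivity
  have h2 : ∀ᶠ x in atTop, |L| / 2 ≤ ‖f x‖ := by
    filter_upwards [h (Metric.ball_mem_nhds L hpos)] with x hx
    have hx' : |f x - L| < |L| / 2 := by simpa [Real.dist_eq] using hx
    have h3 : |L| - |f x| ≤ |f x - L| := by
      rw [abs_sub_comm]; exact abs_sub_abs_le_abs_sub L (f x)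
    simp only [Real.norm_eq_abs]; linarith
  obtain ⟨M, hM⟩ := eventually_atTop.mp h2
  have hconst : Integrable (fun _ : ℝ => |L| / 2) (volume.restrict (Set.Ici M)) := by
    refine Integrable.mono' (hf.norm.restrict) aestronglyMeasurable_const ?_
    refine (ae_restrict_iff' measurableSet_Ici).mpr (Eventually.of_forall fun x hx => ?_)
    simpa [abs_of_nonneg hpos.le] using hM x hx
  rw [integrable_const_iff] at hconst
  rcases hconst with h | h
  · exact hpos.ne' h
  · haveI := h
    have h := measure_lt_top (volume.restrict (Set.Ici M)) Set.univ
    simp [Measure.restrict_apply_univ, Real.volume_Ici] at h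

lemma limzero_atBot {f : ℝ → ℝ} (hf : Integrable f) {L : ℝ}
    (h : Tendsto f atBot (nhds L)) : L = 0 := by
  refine limzero_atTop (f := fun x => f (-x)) ?_ ?_
  · exact hf.comp_neg
  · exact h.comp tendsto_neg_atTop_atBot

lemma integral_deriv_zero_1d {f f' : ℝ → ℝ} (hd : ∀ t, HasDerivAt f (f' t) t)
    (hfi : Integrable f) (hf'i : Integrable f') : ∫ t, f' t = 0 := by
  have hsub : ∀ a b : ℝ, ∫ t in a..b, f' t = f b - f a := fun a b =>
    intervalIntegral.integral_eq_sub_of_hasDerivAt (fun x _ => hd x)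
      hf'i.intervalIntegrable
  have htop : Tendsto f atTop (nhds (f 0 + ∫ t in Set.Ioi 0, f' t)) := by
    have h1 := intervalIntegral_tendsto_integral_Ioi 0 hf'i.integrableOn tendsto_id
    have h2 := (tendsto_const_nhds (x := f 0)).add h1
    refine h2.congr fun b => ?_
    rw [hsub]; simp
  have hbot : Tendsto f atBot (nhds (f 0 - ∫ t in Set.Iic 0, f' t)) := by
    have h1 := intervalIntegral_tendsto_integral_Iic 0 hf'i.integrableOn tendsto_id
    have h2 := (tendsto_const_nhds (x := f 0)).sub h1
    refine h2.congr fun b => ?_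
    rw [hsub]; simp
  have e1 := limzero_atTop hfi htop
  have e2 := limzero_atBot hfi hbot
  rw [← intervalIntegral.integral_Iic_add_Ioi (b := (0:ℝ)) hf'i.integrableOn hf'i.integrableOn]
  linarith

lemma div_free {m : ℕ} (f : (Fin (m+1) → ℝ) → ℝ) (hf : ContDiff ℝ (⊤ : ℕ∞) f)
    (hfi : Integrable f) (i : Fin (m+1))
    (hDi : Integrable (fun x => fderiv ℝ f x (Pi.single i 1))) :
    ∫ x, fderiv ℝ f x (Pi.single i 1) = 0 := by
  set D := fun x => fderiv ℝ f x (Pi.single i 1) with hD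
  have hdf : Differentiable ℝ f := hf.differentiable (by simp)
  set e := MeasurableEquiv.piFinSuccAbove (fun _ : Fin (m+1) => ℝ) i with he
  have mp := MeasureTheory.volume_preserving_piFinSuccAbove (fun _ : Fin (m+1) => ℝ) i
  have mps : MeasurePreserving e.symm := MeasurePreserving.symm e mp
  have hsymm : ∀ p : ℝ × (Fin m → ℝ), e.symm p = Fin.insertNth (α := fun _ => ℝ) i p.1 p.2 := by
    intro p; rfl
  have hkey : ∀ (t : ℝ) (y : Fin m → ℝ),
      e.symm (t, y) = (Fin.insertNth (α := fun _ => ℝ) i 0 y) + t • (Pi.single i 1 : Fin (m+1) → ℝ) := by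
    intro t y
    rw [hsymm]
    funext j
    refine Fin.succAboveCases i ?_ ?_ j
    · simp
    · intro k
      simp [Fin.insertNth_apply_succAbove, Pi.single_eq_of_ne (Fin.succAbove_ne i k)]
  have hDs : Integrable (fun p : ℝ × (Fin m → ℝ) => D (e.symm p)) :=
    (mps.integrable_comp_emb e.symm.measurableEmbedding).mpr hDi
  have hfs : Integrable (fun p : ℝ × (Fin m → ℝ) => f (e.symm p)) :=
    (mps.integrable_comp_emb e.symm.measurableEmbedding).mpr hfi
  rw [Measure.volume_eq_prod] at hDs hfs
  have step1 : ∫ x, D x = ∫ p : ℝ × (Fin m → ℝ), D (e.symm p) :=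
    (mps.integral_comp e.symm.measurableEmbedding D).symm
  have step2 : ∫ p : ℝ × (Fin m → ℝ), D (e.symm p)
      = ∫ y : Fin m → ℝ, ∫ t : ℝ, D (e.symm (t, y)) := by
    rw [Measure.volume_eq_prod _ _]
    exact integral_prod_symm _ hDs
  have hae : ∀ᵐ y : Fin m → ℝ, (∫ t : ℝ, D (e.symm (t, y))) = 0 := by
    filter_upwards [hDs.prod_left_ae, hfs.prod_left_ae] with y hDy hfy
    refine integral_deriv_zero_1d (f := fun t => f (e.symm (t, y))) ?_ hfy hDy
    intro t
    have h1 : HasDerivAt (fun s : ℝ => (Fin.insertNth (α := fun _ => ℝ) i 0 y) + s • (Pi.single i 1 : Fin (m+1) → ℝ))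
        (Pi.single i 1) t := by
      simpa using ((hasDerivAt_id t).smul_const (Pi.single i (1:ℝ))).const_add
        (Fin.insertNth (α := fun _ => ℝ) i 0 y)
    have h2 := (hdf _).hasFDerivAt.comp_hasDerivAt t h1
    have : D (e.symm (t, y)) = fderiv ℝ f ((Fin.insertNth (α := fun _ => ℝ) i 0 y) + t • (Pi.single i 1 : Fin (m+1) → ℝ))
        (Pi.single i 1) := by rw [hD]; rw [hkey]
    rw [this]
    have hfe : (fun s : ℝ => f (e.symm (s, y))) = (f ∘ fun s : ℝ =>
        (Fin.insertNth (α := fun _ => ℝ) i 0 y) + s • (Pi.single i 1 : Fin (m+1) → ℝ)) := by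
      funext s; simp only [Function.comp_apply, hkey]
    rw [hfe]
    exact h2
  calc ∫ x, D x = ∫ y : Fin m → ℝ, ∫ t : ℝ, D (e.symm (t, y)) := step1.trans step2
    _ = 0 := by rw [integral_congr_ae hae]; simp

lemma exists_subgrad {n : ℕ} {Δ : Set (Fin n → ℝ)} (hΔconv : Convex ℝ Δ)
    (h0 : (0 : Fin n → ℝ) ∈ interior Δ) {g : (Fin n → ℝ) → ℝ}
    (hgconv : ConvexOn ℝ Δ g) (hgcont : ContinuousOn g (closure Δ)) :
    ∃ ξ : Fin n → ℝ, ∀ y ∈ Δ, g 0 + ∑ i, ξ i * y i ≤ g y := by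
  classical
  set S : Set ((Fin n → ℝ) × ℝ) := {p | p.1 ∈ interior Δ ∧ g p.1 < p.2} with hS
  have hcont_int : ∀ x ∈ interior Δ, ContinuousAt g x := by
    intro x hx
    refine hgcont.continuousAt ?_
    exact Filter.mem_of_superset ((isOpen_interior).mem_nhds hx)
      (interior_subset.trans subset_closure)
  have hSopen : IsOpen S := by
    rw [isOpen_iff_mem_nhds]
    rintro ⟨x, t⟩ ⟨hx, hxt⟩
    have hc : ContinuousAt (fun p : (Fin n → ℝ) × ℝ => g p.1 - p.2) (x, t) :=
      ((hcont_int x hx).comp continuousAt_fst).sub continuousAt_snd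
    have h1 : {p : (Fin n → ℝ) × ℝ | g p.1 - p.2 < 0} ∈ nhds (x, t) :=
      hc.preimage_mem_nhds (Iio_mem_nhds (by simpa using hxt))
    have h2 : {p : (Fin n → ℝ) × ℝ | p.1 ∈ interior Δ} ∈ nhds (x, t) :=
      continuousAt_fst.preimage_mem_nhds (isOpen_interior.mem_nhds hx)
    filter_upwards [h1, h2] with p hp1 hp2
    exact ⟨hp2, by linarith [hp1]⟩
  have hgint : ConvexOn ℝ (interior Δ) g :=
    hgconv.subset interior_subset (hΔconv.interior)
  have hSconv : Convex ℝ S := by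
    rintro ⟨x, s⟩ ⟨hx, hxs⟩ ⟨y, t⟩ ⟨hy, hyt⟩ a b ha hb hab
    refine ⟨hΔconv.interior hx hy ha hb hab, ?_⟩
    have hle := hgint.2 hx hy ha hb hab
    simp only [Prod.smul_mk, Prod.mk_add_mk, smul_eq_mul]
    rcases eq_or_lt_of_le ha with ha0 | ha0
    · have hb1 : b = 1 := by linarith
      simp only [← ha0, hb1, zero_smul, zero_add, one_smul, zero_mul, one_mul] at *
      exact lt_of_le_of_lt (by simpa using hle) hyt
    · have h1 : a * g x < a * s := (mul_lt_mul_iff_right₀ ha0).mpr hxs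
      have h2 : b * g y ≤ b * t := mul_le_mul_of_nonneg_left hyt.le hb
      calc g (a • x + b • y) ≤ a * g x + b * g y := hle
        _ < a * s + b * t := by linarith
  have hnot : ((0 : Fin n → ℝ), g 0) ∉ S := fun h => lt_irrefl _ h.2
  obtain ⟨F, hF⟩ := geometric_hahn_banach_open_point hSconv hSopen hnot
  set c : ℝ := F (0, 1) with hc
  have hFsplit : ∀ (y : Fin n → ℝ) (t : ℝ), F (y, t) = F (y, 0) + t * c := by
    intro y t
    have h : (y, t) = (y, (0:ℝ)) + t • ((0 : Fin n → ℝ), (1:ℝ)) := by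
      simp [Prod.ext_iff]
    rw [h, map_add, F.map_smul]
    simp [hc]
  have hczero : F ((0:Fin n → ℝ), (0:ℝ)) = 0 := map_zero F
  have hmain : ∀ y ∈ interior Δ, ∀ t, g y < t → F (y, 0) + t * c < g 0 * c := by
    intro y hy t ht
    have h1 := hF (y, t) ⟨hy, ht⟩
    rw [hFsplit y t, hFsplit 0 (g 0), hczero, zero_add] at h1
    exact h1
  have hcneg : c < 0 := by
    rcases lt_trichotomy c 0 with h | h | h
    · exact h
    · exfalso
      have h2 := hmain 0 h0 (g 0 + 1) (by linarith)
      rw [hczero] at h2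
      simp only [zero_add, h, mul_zero] at h2
      exact lt_irrefl _ h2
    · exfalso
      have h2 := hmain 0 h0 (g 0 + 1) (by linarith)
      rw [hczero] at h2
      nlinarith
  have hineq_int : ∀ y ∈ interior Δ, g 0 - F (y, 0) / c ≤ g y := by
    intro y hy
    have key : F (y, 0) + g y * c ≤ g 0 * c := by
      refine le_of_forall_pos_lt_add fun ε hε => ?_
      have hδ : 0 < ε / (-c) := div_pos hε (by linarith)
      have hm := hmain y hy (g y + ε / (-c)) (by linarith)
      have hcne : c ≠ 0 := ne_of_lt hcneg
      have hd : ε / (-c) * c = -ε := by rw [div_neg, neg_mul, div_mul_cancel₀ _ hcne]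
      nlinarith [hm, hd]
    have h2 : g 0 - g y ≤ F (y, 0) / c := by
      rw [le_div_iff_of_neg hcneg]
      nlinarith
    linarith
  set ξ : Fin n → ℝ := fun i => -(F (Pi.single i 1, 0)) / c with hξ
  have hFy : ∀ y : Fin n → ℝ, F (y, 0) = ∑ i, y i * F (Pi.single i 1, 0) := by
    intro y
    have hy : (y, (0:ℝ)) = ∑ i, y i • ((Pi.single i 1 : Fin n → ℝ), (0:ℝ)) := by
      rw [Prod.ext_iff]
      constructor
      · rw [Prod.fst_sum]
        simp only [Prod.smul_mk, Prod.fst]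
        funext j
        simp [Finset.sum_apply, Pi.single_apply, mul_comm]
      · rw [Prod.snd_sum]
        simp
    rw [hy, map_sum]
    refine Finset.sum_congr rfl fun i _ => ?_
    rw [F.map_smul]
    simp [mul_comm]
  have hsum : ∀ y : Fin n → ℝ, ∑ i, ξ i * y i = -(F (y, 0) / c) := by
    intro y
    rw [hFy y, Finset.sum_div, ← Finset.sum_neg_distrib]
    exact Finset.sum_congr rfl fun i _ => by rw [hξ]; ring
  have hint_ineq : ∀ y ∈ interior Δ, g 0 + ∑ i, ξ i * y i ≤ g y := by
    intro y hy
    rw [hsum y]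
    have := hineq_int y hy
    linarith
  refine ⟨ξ, fun y hy => ?_⟩
  by_cases hyint : y ∈ interior Δ
  · exact hint_ineq y hyint
  · haveI hne : (nhdsWithin (1:ℝ) (Set.Ioo (0:ℝ) 1)).NeBot := by
      apply mem_closure_iff_nhdsWithin_neBot.mp
      rw [closure_Ioo (by norm_num : (0:ℝ) ≠ 1)]
      exact ⟨by norm_num, le_refl 1⟩
    have hpath : ∀ t ∈ Set.Ioo (0:ℝ) 1, t • y ∈ interior Δ := by
      intro t ht
      have h := hΔconv.combo_closure_interior_mem_interior (a := t) (b := 1 - t)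
        (subset_closure hy) h0 ht.1.le (by linarith [ht.2]) (by ring)
      simpa using h
    have htd : Tendsto (fun t : ℝ => t • y) (nhdsWithin 1 (Set.Ioo 0 1)) (nhds y) := by
      have hcs : Continuous fun t : ℝ => t • y := continuous_id.smul continuous_const
      have h1 := (hcs.tendsto 1).mono_left (nhdsWithin_le_nhds (s := Set.Ioo (0:ℝ) 1))
      simpa using h1
    have htd' : Tendsto (fun t : ℝ => t • y) (nhdsWithin 1 (Set.Ioo 0 1))
        (nhdsWithin y (closure Δ)) := by
      refine tendsto_nhdsWithin_of_tendsto_nhds_of_eventually_within _ htd ?_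
      filter_upwards [self_mem_nhdsWithin] with t ht
      exact subset_closure (interior_subset (hpath t ht))
    have hgy : Tendsto (fun t : ℝ => g (t • y)) (nhdsWithin 1 (Set.Ioo 0 1)) (nhds (g y)) :=
      (hgcont y (subset_closure hy)).tendsto.comp htd'
    have hly : Tendsto (fun t : ℝ => g 0 + ∑ i, ξ i * (t • y) i)
        (nhdsWithin 1 (Set.Ioo 0 1)) (nhds (g 0 + ∑ i, ξ i * y i)) := by
      have heq : ∀ t : ℝ, g 0 + ∑ i, ξ i * (t • y) i = g 0 + t * ∑ i, ξ i * y i := by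
        intro t
        rw [Finset.mul_sum]
        congr 1
        exact Finset.sum_congr rfl fun i _ => by simp [Pi.smul_apply, smul_eq_mul]; ring
      have hc2 : Continuous fun t : ℝ => g 0 + t * ∑ i, ξ i * y i :=
        continuous_const.add (continuous_id.mul continuous_const)
      have h1 := (hc2.tendsto 1).mono_left
        (nhdsWithin_le_nhds (s := Set.Ioo (0:ℝ) 1))
      simp only [one_mul] at h1
      exact h1.congr fun t => (heq t).symm
    refine le_of_tendsto_of_tendsto hly hgy ?_
    filter_upwards [self_mem_nhdsWithin] with t ht
    exact hint_ineq _ (hpath t ht)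

end AuxLemmas

open Filter Set in
/-- Toric Moment–Weight inequality: if `A` is a bounded balancing density on
`Δ` and `e^{h(u)}` is the density on `Δ` of the pushforward of
`|Δ|e^{-u}/∫e^{-u} dx` under `∇u`, then for every convex `g` on `Δ`,
`∫_Δ g(e^{h(u)} - |Δ|A) dy ≥ -|Δ| I_A(g)` where
`I_A(g) = -g(0) + ∫_Δ g·A dy`; consequently, by Cauchy–Schwarz,
`[∫_Δ (e^{h(u)} - |Δ|A)² dy]^{1/2} ≥ -|Δ| I_A(g)/‖g‖₂`. -/
theorem moment_weight_inequality {n : ℕ} (Δ : Set (Fin n → ℝ))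
    (hΔc : IsCompact Δ) (hΔconv : Convex ℝ Δ)
    (h0 : (0 : Fin n → ℝ) ∈ interior Δ)
    (A : (Fin n → ℝ) → ℝ) (C : ℝ) (hAbd : ∀ y ∈ Δ, |A y| ≤ C)
    (hApos : ∀ y ∈ Δ, 0 ≤ A y)
    (hA1 : ∫ y in Δ, A y = 1)
    (hAm : ∀ i : Fin n, ∫ y in Δ, y i * A y = 0)
    (u : (Fin n → ℝ) → ℝ) (hu : ContDiff ℝ (⊤ : ℕ∞) u)
    (huconv : StrictConvexOn ℝ Set.univ u)
    (hgrad : Set.BijOn (fun x => (fun i => fderiv ℝ u x (Pi.single i 1)))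
      Set.univ (interior Δ))
    (hint : Integrable (fun x => Real.exp (-u x)))
    (eH : (Fin n → ℝ) → ℝ) (heHpos : ∀ y ∈ Δ, 0 ≤ eH y)
    (heH : ∀ f : (Fin n → ℝ) → ℝ, ContinuousOn f (closure Δ) →
      ∫ y in Δ, f y * eH y =
        (volume Δ).toReal *
          (∫ x : Fin n → ℝ, f (fun i => fderiv ℝ u x (Pi.single i 1)) * Real.exp (-u x)) /
          (∫ x : Fin n → ℝ, Real.exp (-u x)))
    (g : (Fin n → ℝ) → ℝ) (hgconv : ConvexOn ℝ Δ g)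
    (hgcont : ContinuousOn g (closure Δ)) :
    ((volume Δ).toReal * (g 0 - ∫ y in Δ, g y * A y) ≤
      ∫ y in Δ, g y * (eH y - (volume Δ).toReal * A y)) ∧
    (0 < ∫ y in Δ, (g y) ^ 2 →
      (volume Δ).toReal * (g 0 - ∫ y in Δ, g y * A y) /
          Real.sqrt (∫ y in Δ, (g y) ^ 2) ≤
        Real.sqrt (∫ y in Δ, (eH y - (volume Δ).toReal * A y) ^ 2)) := by
    classical
  set c : ℝ := (volume Δ).toReal with hcdef
  have hc0 : 0 ≤ c := ENNReal.toReal_nonneg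
  have hΔclosed : IsClosed Δ := hΔc.isClosed
  have hclos : closure Δ = Δ := hΔclosed.closure_eq
  have hΔmeas : MeasurableSet Δ := hΔclosed.measurableSet
  have hgcΔ : ContinuousOn g Δ := hgcont.mono subset_closure
  set φ : (Fin n → ℝ) → (Fin n → ℝ) := fun x => fun i => fderiv ℝ u x (Pi.single i 1)
    with hφdef
  have hφmem : ∀ x, φ x ∈ Δ := fun x =>
    interior_subset (hgrad.mapsTo (Set.mem_univ x))
  have hφcont : Continuous φ := by
    refine continuous_pi fun i => ?_
    exact ((ContinuousLinearMap.apply ℝ ℝ (Pi.single i 1)).continuous).comp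
      (hu.continuous_fderiv (by simp))
  have hgφ : Continuous fun x => g (φ x) :=
    hgcont.comp_continuous hφcont fun x => subset_closure (hφmem x)
  obtain ⟨M, hM⟩ := hΔc.exists_bound_of_continuousOn hgcΔ
  obtain ⟨R, hR⟩ := (Bornology.IsBounded.subset_closedBall hΔc.isBounded 0)
  have hybd : ∀ y ∈ Δ, ∀ i, |y i| ≤ R := by
    intro y hy i
    have h1 : ‖y‖ ≤ R := by simpa [Metric.mem_closedBall] using hR hy
    exact le_trans (norm_le_pi_norm y i) h1
  have hφbd : ∀ x i, |φ x i| ≤ R := fun x i => hybd (φ x) (hφmem x) i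
  set Z : ℝ := ∫ x : Fin n → ℝ, Real.exp (-u x) with hZdef
  have hZpos : 0 < Z := integral_exp_pos hint
  -- K2 : divergence-free property
  have K2 : ∀ i : Fin n, ∫ x, fderiv ℝ u x (Pi.single i 1) * Real.exp (-u x) = 0 := by
    intro i
    obtain ⟨m, rfl⟩ : ∃ m, n = m + 1 := ⟨n - 1, (Nat.succ_pred_eq_of_pos i.pos).symm⟩
    set f : (Fin (m+1) → ℝ) → ℝ := fun x => Real.exp (-u x) with hfdef
    have hfc : ContDiff ℝ (⊤ : ℕ∞) f := Real.contDiff_exp.comp hu.neg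
    have hfder : ∀ x, HasFDerivAt f (Real.exp (-u x) • -(fderiv ℝ u x)) x := by
      intro x
      have h1 : HasFDerivAt (fun x => -u x) (-(fderiv ℝ u x)) x :=
        ((hu.differentiable (by simp) x).hasFDerivAt).neg
      exact h1.exp
    have hDeq : ∀ x, fderiv ℝ f x (Pi.single i 1)
        = -(fderiv ℝ u x (Pi.single i 1) * Real.exp (-u x)) := by
      intro x
      rw [(hfder x).fderiv]
      simp only [ContinuousLinearMap.coe_smul', Pi.smul_apply,
        ContinuousLinearMap.neg_apply, smul_eq_mul]
      ring
    have hDfun : (fun x => fderiv ℝ f x (Pi.single i 1))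
        = fun x => -(fderiv ℝ u x (Pi.single i 1) * Real.exp (-u x)) := funext hDeq
    have hDcont : Continuous fun x => fderiv ℝ f x (Pi.single i 1) := by
      rw [hDfun]
      exact ((((ContinuousLinearMap.apply ℝ ℝ (Pi.single i 1)).continuous).comp
        (hu.continuous_fderiv (by simp))).mul
        (Real.continuous_exp.comp hu.continuous.neg)).neg
    have hDint : Integrable fun x => fderiv ℝ f x (Pi.single i 1) := by
      refine Integrable.mono' (hint.const_mul R) hDcont.aestronglyMeasurable
        (Filter.Eventually.of_forall fun x => ?_)
      rw [hDeq]
      rw [Real.norm_eq_abs, abs_neg, abs_mul, abs_of_pos (Real.exp_pos _)]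
      exact mul_le_mul_of_nonneg_right (hφbd x i) (Real.exp_pos _).le
    have hzero := div_free f hfc hint i hDint
    rw [hDfun] at hzero
    rw [integral_neg] at hzero
    linarith
  -- subgradient
  obtain ⟨ξ, hξ⟩ := exists_subgrad hΔconv h0 hgconv hgcont
  set ℓ : (Fin n → ℝ) → ℝ := fun y => g 0 + ∑ i, ξ i * y i with hℓdef
  -- A-side integrabilities
  have hAint : IntegrableOn A Δ := by
    by_contra h
    rw [integral_undef h] at hA1
    exact one_ne_zero hA1.symm
  have hAmeas := hAint.aestronglyMeasurable
  have hgA : IntegrableOn (fun y => g y * A y) Δ := by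
    refine Integrable.mono' (hAint.abs.const_mul M)
      ((hgcΔ.aestronglyMeasurable hΔmeas).mul hAmeas)
      ((ae_restrict_iff' hΔmeas).mpr (Filter.Eventually.of_forall fun y hy => ?_))
    rw [Real.norm_eq_abs, abs_mul]
    exact mul_le_mul_of_nonneg_right (hM y hy) (abs_nonneg _)
  have hyA : ∀ i, IntegrableOn (fun y => y i * A y) Δ := by
    intro i
    refine Integrable.mono' (hAint.abs.const_mul R)
      (((continuous_apply i).continuousOn.aestronglyMeasurable hΔmeas).mul hAmeas)
      ((ae_restrict_iff' hΔmeas).mpr (Filter.Eventually.of_forall fun y hy => ?_))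
    rw [Real.norm_eq_abs, abs_mul]
    exact mul_le_mul_of_nonneg_right (hybd y hy i) (abs_nonneg _)
  have hℓfun : (fun y => ℓ y * A y)
      = fun y => g 0 * A y + ∑ i, ξ i * (y i * A y) := by
    funext y
    rw [hℓdef]
    simp only
    rw [add_mul, Finset.sum_mul]
    congr 1
    exact Finset.sum_congr rfl fun i _ => by ring
  have hℓA : IntegrableOn (fun y => ℓ y * A y) Δ := by
    rw [hℓfun]
    exact (hAint.const_mul (g 0)).add
      (integrable_finset_sum _ fun i _ => (hyA i).const_mul (ξ i))
  have hℓAval : ∫ y in Δ, ℓ y * A y = g 0 := by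
    rw [hℓfun]
    rw [integral_add (hAint.const_mul (g 0))
      (integrable_finset_sum _ fun i _ => (hyA i).const_mul (ξ i))]
    rw [integral_finset_sum _ fun i _ => (hyA i).const_mul (ξ i)]
    rw [integral_const_mul, hA1]
    simp only [integral_const_mul, hAm, mul_zero, Finset.sum_const_zero]
    ring
  have hgA_ge : g 0 ≤ ∫ y in Δ, g y * A y := by
    have hd : 0 ≤ ∫ y in Δ, (g y - ℓ y) * A y :=
      setIntegral_nonneg hΔmeas fun y hy =>
        mul_nonneg (sub_nonneg.mpr (hξ y hy)) (hApos y hy)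
    have hsplit : ∫ y in Δ, (g y - ℓ y) * A y
        = (∫ y in Δ, g y * A y) - ∫ y in Δ, ℓ y * A y := by
      rw [← integral_sub hgA hℓA]
      congr 1
      funext y
      ring
    rw [hsplit, hℓAval] at hd
    linarith
  -- x-side
  have hgφint : Integrable fun x => g (φ x) * Real.exp (-u x) := by
    refine Integrable.mono' (hint.const_mul M)
      (hgφ.mul (Real.continuous_exp.comp hu.continuous.neg)).aestronglyMeasurable
      (Filter.Eventually.of_forall fun x => ?_)
    rw [Real.norm_eq_abs, abs_mul, abs_of_pos (Real.exp_pos _)]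
    exact mul_le_mul_of_nonneg_right (hM _ (hφmem x)) (Real.exp_pos _).le
  have hφiexp : ∀ i, Integrable fun x => φ x i * Real.exp (-u x) := by
    intro i
    refine Integrable.mono' (hint.const_mul R)
      (((continuous_apply i).comp hφcont).mul
        (Real.continuous_exp.comp hu.continuous.neg)).aestronglyMeasurable
      (Filter.Eventually.of_forall fun x => ?_)
    rw [Real.norm_eq_abs, abs_mul, abs_of_pos (Real.exp_pos _)]
    exact mul_le_mul_of_nonneg_right (hφbd x i) (Real.exp_pos _).le
  have hℓφfun : (fun x => ℓ (φ x) * Real.exp (-u x))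
      = fun x => g 0 * Real.exp (-u x) + ∑ i, ξ i * (φ x i * Real.exp (-u x)) := by
    funext x
    rw [hℓdef]
    simp only
    rw [add_mul, Finset.sum_mul]
    congr 1
    exact Finset.sum_congr rfl fun i _ => by ring
  have hℓφint : Integrable fun x => ℓ (φ x) * Real.exp (-u x) := by
    rw [hℓφfun]
    exact (hint.const_mul (g 0)).add
      (integrable_finset_sum _ fun i _ => (hφiexp i).const_mul (ξ i))
  have hℓφval : ∫ x, ℓ (φ x) * Real.exp (-u x) = g 0 * Z := by
    rw [hℓφfun]
    rw [integral_add (hint.const_mul (g 0))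
      (integrable_finset_sum _ fun i _ => (hφiexp i).const_mul (ξ i))]
    rw [integral_finset_sum _ fun i _ => (hφiexp i).const_mul (ξ i)]
    rw [integral_const_mul]
    have hK : ∀ i, ∫ x, φ x i * Real.exp (-u x) = 0 := fun i => K2 i
    simp only [integral_const_mul, hK, mul_zero, Finset.sum_const_zero, add_zero]
    rfl
  have hkey : g 0 * Z ≤ ∫ x, g (φ x) * Real.exp (-u x) := by
    have hd : 0 ≤ ∫ x, (g (φ x) - ℓ (φ x)) * Real.exp (-u x) :=
      integral_nonneg fun x =>
        mul_nonneg (sub_nonneg.mpr (hξ (φ x) (hφmem x))) (Real.exp_pos _).le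
    have hsplit : ∫ x, (g (φ x) - ℓ (φ x)) * Real.exp (-u x)
        = (∫ x, g (φ x) * Real.exp (-u x)) - ∫ x, ℓ (φ x) * Real.exp (-u x) := by
      rw [← integral_sub hgφint hℓφint]
      congr 1
      funext x
      ring
    rw [hsplit, hℓφval] at hd
    linarith
  have hV : c * g 0 ≤ c * (∫ x, g (φ x) * Real.exp (-u x)) / Z := by
    rw [le_div_iff₀ hZpos]
    have h1 := mul_le_mul_of_nonneg_left hkey hc0
    nlinarith
  -- Part 1
  have part1 : c * (g 0 - ∫ y in Δ, g y * A y) ≤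
      ∫ y in Δ, g y * (eH y - c * A y) := by
    by_cases hP : IntegrableOn (fun y => g y * (eH y - c * A y)) Δ
    · have hgeH : IntegrableOn (fun y => g y * eH y) Δ := by
        have heq : (fun y => g y * eH y)
            = fun y => g y * (eH y - c * A y) + c * (g y * A y) := by
          funext y; ring
        rw [heq]
        exact hP.add (hgA.const_mul c)
      have hsplit : ∫ y in Δ, g y * (eH y - c * A y)
          = (∫ y in Δ, g y * eH y) - c * ∫ y in Δ, g y * A y := by
        rw [← integral_const_mul c, ← integral_sub hgeH (hgA.const_mul c)]
        congr 1
        funext y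
        ring
      rw [hsplit, heH g hgcont]
      have h2 : c * (∫ x, g (φ x) * Real.exp (-u x)) / Z
          = (volume Δ).toReal * (∫ x : Fin n → ℝ,
              g (fun i => fderiv ℝ u x (Pi.single i 1)) * Real.exp (-u x)) /
              (∫ x : Fin n → ℝ, Real.exp (-u x)) := rfl
      rw [← h2]
      linarith
    · rw [integral_undef hP]
      nlinarith
  refine ⟨part1, fun hg2 => ?_⟩
  have h1 : c * (g 0 - ∫ y in Δ, g y * A y) ≤ 0 := by
    have := mul_le_mul_of_nonneg_left (show g 0 - ∫ y in Δ, g y * A y ≤ 0 by linarith)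
      hc0
    simpa using this
  have h2 : c * (g 0 - ∫ y in Δ, g y * A y) / Real.sqrt (∫ y in Δ, (g y) ^ 2) ≤ 0 :=
    div_nonpos_iff.mpr (Or.inr ⟨h1, Real.sqrt_nonneg _⟩)
  exact le_trans h2 (Real.sqrt_nonneg _)
end

section
/- Let Δ = {y ∈ ℝ³ : y₁ + y₂ + 2y₃ < 1, y₁ > -1, y₂ > -1, -1 < y₃ < 1} (the polytope of ℙ(O_{ℙ²} ⊕ O_{ℙ²}(2))). Then its Ricci affine function is l(y) = (60/349) y₃ + 57/349, and inf_Δ l = l evaluated at y₃ = -1 equals -3/349 < 0; hence Δ is relative Ding unstable. -/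
open MeasureTheory Set

noncomputable def eqv : (Fin 3 → ℝ) ≃ᵐ ℝ × (ℝ × ℝ) :=
  (MeasurableEquiv.piFinSuccAbove (fun _ : Fin 3 => ℝ) 2).trans
    ((MeasurableEquiv.refl ℝ).prodCongr MeasurableEquiv.finTwoArrow)

lemma eqv_mp : MeasurePreserving eqv volume volume := by
  have h1 := volume_preserving_piFinSuccAbove (fun _ : Fin 3 => ℝ) 2
  have h2 := (MeasurePreserving.id (volume : Measure ℝ)).prod
      (volume_preserving_finTwoArrow ℝ)
  rw [← MeasureTheory.Measure.volume_eq_prod, ← MeasureTheory.Measure.volume_eq_prod] at h2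
  exact h2.comp h1

lemma eqv_symm_apply (p : ℝ × ℝ × ℝ) : eqv.symm p = ![p.2.1, p.2.2, p.1] := by
  funext i
  fin_cases i <;>
    simp [eqv, MeasurableEquiv.piFinSuccAbove,
      MeasurableEquiv.finTwoArrow, MeasurableEquiv.prodCongr, MeasurableEquiv.piFinTwo,
      Fin.insertNthEquiv, Fin.insertNth, Fin.succAboveCases] <;>
    rfl

def S : Set (ℝ × ℝ × ℝ) :=
  {p | p.2.1 + p.2.2 + 2 * p.1 < 1 ∧ -1 < p.2.1 ∧ -1 < p.2.2 ∧ -1 < p.1 ∧ p.1 < 1}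

def Dset : Set (Fin 3 → ℝ) :=
  {y | y 0 + y 1 + 2 * y 2 < 1 ∧ -1 < y 0 ∧ -1 < y 1 ∧ -1 < y 2 ∧ y 2 < 1}

lemma hSm : MeasurableSet S := by
  have : S = {p : ℝ × ℝ × ℝ | p.2.1 + p.2.2 + 2 * p.1 < 1} ∩
      ({p | -1 < p.2.1} ∩ ({p | -1 < p.2.2} ∩ ({p | -1 < p.1} ∩ {p | p.1 < 1}))) := by
    ext p; simp [S, mem_setOf_eq]
  rw [this]
  exact (measurableSet_lt (by fun_prop) (by fun_prop)).inter
    ((measurableSet_lt (by fun_prop) (by fun_prop)).inter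
      ((measurableSet_lt (by fun_prop) (by fun_prop)).inter
        ((measurableSet_lt (by fun_prop) (by fun_prop)).inter
          (measurableSet_lt (by fun_prop) (by fun_prop)))))

lemma preimage_Dset : eqv.symm ⁻¹' Dset = S := by
  ext p
  simp only [mem_preimage, Dset, S, mem_setOf_eq, eqv_symm_apply]
  simp [Matrix.cons_val_zero, Matrix.cons_val_one, Matrix.head_cons]

lemma reduce (g : ℝ → ℝ → ℝ → ℝ) :
    (∫ y in Dset, g (y 2) (y 0) (y 1)) = ∫ p in S, g p.1 p.2.1 p.2.2 := by
  have h := (eqv_mp.symm).setIntegral_preimage_emb eqv.symm.measurableEmbedding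
      (fun y : Fin 3 → ℝ => g (y 2) (y 0) (y 1)) Dset
  calc (∫ y in Dset, g (y 2) (y 0) (y 1))
      = ∫ p in eqv.symm ⁻¹' Dset,
          g ((eqv.symm p) 2) ((eqv.symm p) 0) ((eqv.symm p) 1) := h.symm
    _ = ∫ p in S, g p.1 p.2.1 p.2.2 := by
        rw [preimage_Dset]
        refine setIntegral_congr_fun hSm (fun p _ => ?_)
        rw [eqv_symm_apply]
        simp

lemma fubini_S (g : ℝ → ℝ → ℝ → ℝ) (hg : Continuous fun p : ℝ × ℝ × ℝ => g p.1 p.2.1 p.2.2) :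
    ∫ p in S, g p.1 p.2.1 p.2.2 =
      ∫ c in Ioo (-1:ℝ) 1, ∫ a in Ioo (-1:ℝ) (2 - 2*c),
        ∫ b in Ioo (-1:ℝ) (1 - 2*c - a), g c a b := by
  set G : ℝ × ℝ × ℝ → ℝ := fun p => g p.1 p.2.1 p.2.2 with hG
  have hIntS : IntegrableOn G S := by
    have hbox : S ⊆ Icc (-1:ℝ) 1 ×ˢ (Icc (-1:ℝ) 4 ×ˢ Icc (-1:ℝ) 4) := by
      rintro ⟨c, a, b⟩ ⟨h1, h2, h3, h4, h5⟩
      simp only [mem_setOf_eq] at *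
      exact ⟨⟨h4.le, h5.le⟩, ⟨h2.le, by nlinarith⟩, ⟨h3.le, by nlinarith⟩⟩
    exact (hg.continuousOn.integrableOn_compact
      (isCompact_Icc.prod (isCompact_Icc.prod isCompact_Icc))).mono_set hbox
  have key : ∀ c : ℝ, (∫ q : ℝ × ℝ, S.indicator G (c, q)) =
      (Ioo (-1:ℝ) 1).indicator
        (fun c => ∫ a in Ioo (-1:ℝ) (2 - 2*c),
          ∫ b in Ioo (-1:ℝ) (1 - 2*c - a), g c a b) c := by
    intro c
    by_cases hc : c ∈ Ioo (-1:ℝ) 1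
    · obtain ⟨hc1, hc2⟩ := mem_Ioo.mp hc
      rw [Set.indicator_of_mem hc]
      set U : Set (ℝ × ℝ) := {q | -1 < q.1 ∧ -1 < q.2 ∧ q.1 + q.2 < 1 - 2*c} with hU
      have hUm : MeasurableSet U := by
        have : U = {q : ℝ × ℝ | -1 < q.1} ∩ ({q | -1 < q.2} ∩ {q | q.1 + q.2 < 1 - 2*c}) := by
          ext q; simp [hU, mem_setOf_eq]
        rw [this]
        exact (measurableSet_lt (by fun_prop) (by fun_prop)).inter
          ((measurableSet_lt (by fun_prop) (by fun_prop)).inter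
            (measurableSet_lt (by fun_prop) (by fun_prop)))
      have hgc : Continuous fun q : ℝ × ℝ => g c q.1 q.2 :=
        hg.comp (continuous_const.prodMk continuous_id)
      have hIntU : IntegrableOn (fun q : ℝ × ℝ => g c q.1 q.2) U := by
        have hbox : U ⊆ Icc (-1:ℝ) 4 ×ˢ Icc (-1:ℝ) 4 := by
          rintro ⟨a, b⟩ ⟨h1, h2, h3⟩
          simp only [mem_setOf_eq] at *
          exact ⟨⟨h1.le, by nlinarith⟩, ⟨h2.le, by nlinarith⟩⟩
        exact (hgc.continuousOn.integrableOn_compact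
          (isCompact_Icc.prod isCompact_Icc)).mono_set hbox
      have hind : (fun q : ℝ × ℝ => S.indicator G (c, q)) =
          U.indicator (fun q : ℝ × ℝ => g c q.1 q.2) := by
        funext q
        have hiff : (c, q) ∈ S ↔ q ∈ U := by
          simp only [S, hU, mem_setOf_eq]
          constructor
          · rintro ⟨h1, h2, h3, _, _⟩; exact ⟨h2, h3, by linarith⟩
          · rintro ⟨h1, h2, h3⟩; exact ⟨by linarith, h1, h2, hc1, hc2⟩
        by_cases hq : q ∈ U
        · rw [Set.indicator_of_mem hq, Set.indicator_of_mem (hiff.mpr hq)]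
        · rw [Set.indicator_of_notMem hq,
            Set.indicator_of_notMem (fun h => hq (hiff.mp h))]
      have key2 : ∀ a : ℝ, (∫ b : ℝ, U.indicator (fun q : ℝ × ℝ => g c q.1 q.2) (a, b)) =
          (Ioo (-1:ℝ) (2 - 2*c)).indicator
            (fun a => ∫ b in Ioo (-1:ℝ) (1 - 2*c - a), g c a b) a := by
        intro a
        by_cases ha : -1 < a
        · have hindb : (fun b : ℝ => U.indicator (fun q : ℝ × ℝ => g c q.1 q.2) (a, b)) =
              (Ioo (-1:ℝ) (1 - 2*c - a)).indicator (fun b => g c a b) := by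
            funext b
            have hiff : (a, b) ∈ U ↔ b ∈ Ioo (-1:ℝ) (1 - 2*c - a) := by
              simp only [hU, mem_setOf_eq, mem_Ioo]
              constructor
              · rintro ⟨_, h2, h3⟩; exact ⟨h2, by linarith⟩
              · rintro ⟨h1, h2⟩; exact ⟨ha, h1, by linarith⟩
            by_cases hb : (a, b) ∈ U
            · rw [Set.indicator_of_mem hb, Set.indicator_of_mem (hiff.mp hb)]
            · rw [Set.indicator_of_notMem hb,
                Set.indicator_of_notMem (fun h => hb (hiff.mpr h))]
          rw [hindb, integral_indicator measurableSet_Ioo]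
          by_cases ha2 : a < 2 - 2*c
          · rw [Set.indicator_of_mem (mem_Ioo.mpr ⟨ha, ha2⟩)]
          · push_neg at ha2
            rw [Set.indicator_of_notMem (fun h => absurd (mem_Ioo.mp h).2 (not_lt.mpr ha2)),
              Set.Ioo_eq_empty (by intro h; linarith), setIntegral_empty]
        · have h0 : (fun b : ℝ => U.indicator (fun q : ℝ × ℝ => g c q.1 q.2) (a, b)) =
              fun _ => 0 := funext fun b => Set.indicator_of_notMem (fun h => ha h.1) _
          rw [h0, integral_zero,
            Set.indicator_of_notMem (fun h => ha (mem_Ioo.mp h).1)]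
      calc (∫ q : ℝ × ℝ, S.indicator G (c, q))
          = ∫ q : ℝ × ℝ, U.indicator (fun q : ℝ × ℝ => g c q.1 q.2) q := by rw [hind]
        _ = ∫ a : ℝ, ∫ b : ℝ, U.indicator (fun q : ℝ × ℝ => g c q.1 q.2) (a, b) := by
            rw [MeasureTheory.Measure.volume_eq_prod]
            exact integral_prod _ (by
              rw [← MeasureTheory.Measure.volume_eq_prod]
              exact hIntU.integrable_indicator hUm)
        _ = ∫ a : ℝ, (Ioo (-1:ℝ) (2 - 2*c)).indicator
              (fun a => ∫ b in Ioo (-1:ℝ) (1 - 2*c - a), g c a b) a := by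
            congr 1; funext a; exact key2 a
        _ = ∫ a in Ioo (-1:ℝ) (2 - 2*c), ∫ b in Ioo (-1:ℝ) (1 - 2*c - a), g c a b :=
            integral_indicator measurableSet_Ioo
    · rw [Set.indicator_of_notMem hc]
      have h0 : (fun q : ℝ × ℝ => S.indicator G (c, q)) = fun _ => 0 := by
        funext q
        exact Set.indicator_of_notMem
          (fun hm => hc (mem_Ioo.mpr ⟨hm.2.2.2.1, hm.2.2.2.2⟩)) _
      rw [h0, integral_zero]
  calc (∫ p in S, G p) = ∫ p, S.indicator G p := (integral_indicator hSm).symm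
    _ = ∫ c : ℝ, ∫ q : ℝ × ℝ, S.indicator G (c, q) := by
        rw [MeasureTheory.Measure.volume_eq_prod]
        exact integral_prod _ (by
          rw [← MeasureTheory.Measure.volume_eq_prod]
          exact hIntS.integrable_indicator hSm)
    _ = ∫ c : ℝ, (Ioo (-1:ℝ) 1).indicator
          (fun c => ∫ a in Ioo (-1:ℝ) (2 - 2*c),
            ∫ b in Ioo (-1:ℝ) (1 - 2*c - a), g c a b) c := by
        congr 1; funext c; exact key c
    _ = _ := integral_indicator measurableSet_Ioo

lemma ioo_eq (f : ℝ → ℝ) {a b : ℝ} (h : a ≤ b) :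
    ∫ x in Ioo a b, f x = ∫ x in a..b, f x := by
  rw [intervalIntegral.integral_of_le h, integral_Ioc_eq_integral_Ioo]

lemma integral_poly (x y p0 p1 p2 p3 p4 : ℝ) :
    ∫ t in x..y, (p0 + p1 * t + p2 * t ^ 2 + p3 * t ^ 3 + p4 * t ^ 4) =
      p0 * (y - x) + p1 * (y ^ 2 - x ^ 2) / 2 + p2 * (y ^ 3 - x ^ 3) / 3 +
        p3 * (y ^ 4 - x ^ 4) / 4 + p4 * (y ^ 5 - x ^ 5) / 5 := by
  have hF : ∀ t : ℝ, HasDerivAt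
      (fun t : ℝ => p0 * t + p1 * t ^ 2 / 2 + p2 * t ^ 3 / 3 + p3 * t ^ 4 / 4 + p4 * t ^ 5 / 5)
      (p0 + p1 * t + p2 * t ^ 2 + p3 * t ^ 3 + p4 * t ^ 4) t := by
    intro t
    have h1 : HasDerivAt (fun t : ℝ => p0 * t + p1 * t ^ 2 / 2 + p2 * t ^ 3 / 3 +
        p3 * t ^ 4 / 4 + p4 * t ^ 5 / 5)
        (p0 * 1 + p1 * (2 * t ^ 1) / 2 + p2 * (3 * t ^ 2) / 3 + p3 * (4 * t ^ 3) / 4 +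
          p4 * (5 * t ^ 4) / 5) t := by
      exact (((((hasDerivAt_id t).const_mul p0).add
        (((hasDerivAt_pow 2 t).const_mul p1).div_const 2)).add
        (((hasDerivAt_pow 3 t).const_mul p2).div_const 3)).add
        (((hasDerivAt_pow 4 t).const_mul p3).div_const 4)).add
        (((hasDerivAt_pow 5 t).const_mul p4).div_const 5)
    convert h1 using 1
    push_cast
    ring
  rw [intervalIntegral.integral_eq_sub_of_hasDerivAt (fun t _ => hF t)
    ((Continuous.intervalIntegrable (by continuity) x y))]
  ring

lemma comp1 :
    (∫ c in Ioo (-1:ℝ) 1, ∫ a in Ioo (-1:ℝ) (2 - 2*c),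
      ∫ b in Ioo (-1:ℝ) (1 - 2*c - a), (60/349*c + 57/349)) = 1 := by
  have L2 : EqOn (fun c : ℝ => ∫ a in Ioo (-1:ℝ) (2 - 2*c),
      ∫ b in Ioo (-1:ℝ) (1 - 2*c - a), (60/349*c + 57/349))
      (fun c : ℝ => 9/2*(57/349) + (9*(60/349)-12*(57/349))/2 * c
        + (4*(57/349)-12*(60/349))/2 * c^2 + 2*(60/349) * c^3 + 0 * c^4)
      (uIcc (-1:ℝ) 1) := by
    intro c hc
    rw [Set.uIcc_of_le (by norm_num)] at hc
    have hc2 : c ≤ 1 := hc.2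
    have hinner : EqOn (fun a : ℝ => ∫ b in Ioo (-1:ℝ) (1 - 2*c - a), (60/349*c + 57/349))
        (fun a : ℝ => (60/349*c + 57/349)*(2-2*c) + (-(60/349*c + 57/349)) * a
          + 0 * a^2 + 0 * a^3 + 0 * a^4) (Ioo (-1:ℝ) (2 - 2*c)) := by
      intro a ha
      simp only
      rw [ioo_eq _ (by rcases ha with ⟨_, h⟩; linarith), intervalIntegral.integral_const]
      simp [smul_eq_mul]
      ring
    simp only
    rw [setIntegral_congr_fun measurableSet_Ioo hinner, ioo_eq _ (by linarith), integral_poly]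
    ring
  rw [ioo_eq _ (by norm_num), intervalIntegral.integral_congr L2, integral_poly]
  norm_num

lemma comp2 :
    (∫ c in Ioo (-1:ℝ) 1, ∫ a in Ioo (-1:ℝ) (2 - 2*c),
      ∫ b in Ioo (-1:ℝ) (1 - 2*c - a), c * (60/349*c + 57/349)) = 0 := by
  have L2 : EqOn (fun c : ℝ => ∫ a in Ioo (-1:ℝ) (2 - 2*c),
      ∫ b in Ioo (-1:ℝ) (1 - 2*c - a), c * (60/349*c + 57/349))
      (fun c : ℝ => 0 + 9/2*(57/349) * c + (9*(60/349)-12*(57/349))/2 * c^2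
        + (4*(57/349)-12*(60/349))/2 * c^3 + 2*(60/349) * c^4)
      (uIcc (-1:ℝ) 1) := by
    intro c hc
    rw [Set.uIcc_of_le (by norm_num)] at hc
    have hc2 : c ≤ 1 := hc.2
    have hinner : EqOn (fun a : ℝ => ∫ b in Ioo (-1:ℝ) (1 - 2*c - a), c * (60/349*c + 57/349))
        (fun a : ℝ => c * (60/349*c + 57/349)*(2-2*c) + (-(c * (60/349*c + 57/349))) * a
          + 0 * a^2 + 0 * a^3 + 0 * a^4) (Ioo (-1:ℝ) (2 - 2*c)) := by
      intro a ha
      simp only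
      rw [ioo_eq _ (by rcases ha with ⟨_, h⟩; linarith), intervalIntegral.integral_const]
      simp [smul_eq_mul]
      ring
    simp only
    rw [setIntegral_congr_fun measurableSet_Ioo hinner, ioo_eq _ (by linarith), integral_poly]
    ring
  rw [ioo_eq _ (by norm_num), intervalIntegral.integral_congr L2, integral_poly]
  norm_num

lemma comp3 :
    (∫ c in Ioo (-1:ℝ) 1, ∫ a in Ioo (-1:ℝ) (2 - 2*c),
      ∫ b in Ioo (-1:ℝ) (1 - 2*c - a), a * (60/349*c + 57/349)) = 0 := by
  have L2 : EqOn (fun c : ℝ => ∫ a in Ioo (-1:ℝ) (2 - 2*c),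
      ∫ b in Ioo (-1:ℝ) (1 - 2*c - a), a * (60/349*c + 57/349))
      (fun c : ℝ => 0 + (-3*(57/349)) * c + (4*(57/349)-3*(60/349)) * c^2
        + (4*(60/349)-4/3*(57/349)) * c^3 + (-4/3*(60/349)) * c^4)
      (uIcc (-1:ℝ) 1) := by
    intro c hc
    rw [Set.uIcc_of_le (by norm_num)] at hc
    have hc2 : c ≤ 1 := hc.2
    have hinner : EqOn (fun a : ℝ => ∫ b in Ioo (-1:ℝ) (1 - 2*c - a), a * (60/349*c + 57/349))
        (fun a : ℝ => 0 + ((60/349*c + 57/349)*(2-2*c)) * a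
          + (-(60/349*c + 57/349)) * a^2 + 0 * a^3 + 0 * a^4) (Ioo (-1:ℝ) (2 - 2*c)) := by
      intro a ha
      simp only
      rw [ioo_eq _ (by rcases ha with ⟨_, h⟩; linarith), intervalIntegral.integral_const]
      simp [smul_eq_mul]
      ring
    simp only
    rw [setIntegral_congr_fun measurableSet_Ioo hinner, ioo_eq _ (by linarith), integral_poly]
    ring
  rw [ioo_eq _ (by norm_num), intervalIntegral.integral_congr L2, integral_poly]
  norm_num

lemma comp4 :
    (∫ c in Ioo (-1:ℝ) 1, ∫ a in Ioo (-1:ℝ) (2 - 2*c),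
      ∫ b in Ioo (-1:ℝ) (1 - 2*c - a), b * (60/349*c + 57/349)) = 0 := by
  have L2 : EqOn (fun c : ℝ => ∫ a in Ioo (-1:ℝ) (2 - 2*c),
      ∫ b in Ioo (-1:ℝ) (1 - 2*c - a), b * (60/349*c + 57/349))
      (fun c : ℝ => 0 + (-3*(57/349)) * c + (4*(57/349)-3*(60/349)) * c^2
        + (4*(60/349)-4/3*(57/349)) * c^3 + (-4/3*(60/349)) * c^4)
      (uIcc (-1:ℝ) 1) := by
    intro c hc
    rw [Set.uIcc_of_le (by norm_num)] at hc
    have hc2 : c ≤ 1 := hc.2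
    have hinner : EqOn (fun a : ℝ => ∫ b in Ioo (-1:ℝ) (1 - 2*c - a), b * (60/349*c + 57/349))
        (fun a : ℝ => (60/349*c + 57/349)*((1-2*c)^2-1)/2
          + (-((60/349*c + 57/349)*(1-2*c))) * a
          + ((60/349*c + 57/349)/2) * a^2 + 0 * a^3 + 0 * a^4) (Ioo (-1:ℝ) (2 - 2*c)) := by
      intro a ha
      simp only
      rw [ioo_eq _ (by rcases ha with ⟨_, h⟩; linarith),
        intervalIntegral.integral_congr
          (g := fun b : ℝ => 0 + (60/349*c + 57/349) * b + 0*b^2 + 0*b^3 + 0*b^4)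
          (fun t _ => by ring), integral_poly]
      ring
    simp only
    rw [setIntegral_congr_fun measurableSet_Ioo hinner, ioo_eq _ (by linarith), integral_poly]
    ring
  rw [ioo_eq _ (by norm_num), intervalIntegral.integral_congr L2, integral_poly]
  norm_num

lemma pt_mem (t : ℝ) (h1 : -1 < t) (h2 : t < 1) : ![(-1:ℝ)/2, -1/2, t] ∈ Dset := by
  refine ⟨?_, ?_, ?_, ?_, ?_⟩ <;> simp [Dset] <;> linarith

lemma glb : IsGLB ((fun y : Fin 3 → ℝ => (60/349) * y 2 + 57/349) '' Dset) (-3/349) := by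
  constructor
  · rintro x ⟨y, hy, rfl⟩
    have h := hy.2.2.2.1
    simp only
    linarith
  · intro b hb
    by_contra hcon
    push_neg at hcon
    have hb0 : b ≤ 57/349 := by
      have := hb ⟨![(-1:ℝ)/2, -1/2, 0], pt_mem 0 (by norm_num) (by norm_num), rfl⟩
      simpa using this
    set t : ℝ := ((349*b - 57)/60 - 1)/2 with ht
    have ht1 : -1 < t := by rw [ht]; nlinarith
    have ht2 : t < 1 := by rw [ht]; nlinarith
    have hbt : b ≤ 60/349 * t + 57/349 := by
      have := hb ⟨![(-1:ℝ)/2, -1/2, t], pt_mem t ht1 ht2, rfl⟩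
      simpa using this
    rw [ht] at hbt
    nlinarith

/-- For the polytope `Δ = {y₁+y₂+2y₃ < 1, y₁ > -1, y₂ > -1, -1 < y₃ < 1}` of
`ℙ(O_{ℙ²} ⊕ O_{ℙ²}(2))`, the Ricci affine function is
`l(y) = (60/349)y₃ + 57/349`, and `inf_Δ l = -3/349 < 0`; hence `Δ` is
relative Ding unstable. -/
theorem ricci_affine_B1_unstable :
    let Δ : Set (Fin 3 → ℝ) :=
      {y | y 0 + y 1 + 2 * y 2 < 1 ∧ -1 < y 0 ∧ -1 < y 1 ∧ -1 < y 2 ∧ y 2 < 1}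
    let l : (Fin 3 → ℝ) → ℝ := fun y => (60 / 349) * y 2 + 57 / 349
    ((∫ y in Δ, l y = 1) ∧ (∀ i : Fin 3, ∫ y in Δ, y i * l y = 0)) ∧
    IsGLB (l '' Δ) (-3 / 349) ∧ ((-3 / 349 : ℝ) < 0) := by
  intro Δ l
  refine ⟨⟨?_, ?_⟩, ?_, by norm_num⟩
  · exact (reduce (fun c _ _ => 60/349*c + 57/349)).trans
      ((fubini_S _ (by fun_prop)).trans comp1)
  · intro i
    fin_cases i
    · exact (reduce (fun c a _ => a * (60/349*c + 57/349))).trans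
        ((fubini_S _ (by fun_prop)).trans comp3)
    · exact (reduce (fun c _ b => b * (60/349*c + 57/349))).trans
        ((fubini_S _ (by fun_prop)).trans comp4)
    · exact (reduce (fun c _ _ => c * (60/349*c + 57/349))).trans
        ((fubini_S _ (by fun_prop)).trans comp2)
  · exact glb
end
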